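/- arXiv:2412.01668 — 4 statements merged into one kernel-verified Lean document; each statement's English description precedes it below -/
import Mathlib

section
/- As d → ∞, the functions (−1)^d s_{2d}(x) converge locally uniformly on ℝ to (2/√3)·cos(πx/3), and their derivatives (−1)^d s_{2d}′(x) converge locally uniformly on ℝ to −(2π/(3√3))·sin(πx/3); that is, on every compact subset of ℝ both convergences are uniform. -/
/-- The real polynomial `c_d`: for `d = 2j`,
`c_{2j}(x) = (1/(2j)!) ∏_{i=1}^{j} (x² − ((2i−1)/2)²)`, and for `d = 2j+1`,
`c_{2j+1}(x) = (1/(2j+1)!) x ∏_{i=1}^{j} (x² − i²)`. -/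
noncomputable def c (d : ℕ) (x : ℝ) : ℝ :=
  if d % 2 = 0 then
    (1 / (d.factorial : ℝ)) * ∏ i ∈ Finset.Icc 1 (d / 2), (x ^ 2 - ((2 * (i : ℝ) - 1) / 2) ^ 2)
  else
    (1 / (d.factorial : ℝ)) * x * ∏ i ∈ Finset.Icc 1 (d / 2), (x ^ 2 - (i : ℝ) ^ 2)

/-- The real polynomial `s_d`: `s_{2k}(x) = Σ_{j=0}^{k} (−1)^{k−j} c_{2j}(x)` and
`s_{2k+1}(x) = Σ_{j=0}^{k} (−1)^{k−j} c_{2j+1}(x)`. -/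
noncomputable def s (d : ℕ) (x : ℝ) : ℝ :=
  ∑ j ∈ Finset.range (d / 2 + 1), (-1 : ℝ) ^ (d / 2 - j) * c (2 * j + d % 2) x


namespace SP
open Real Filter


noncomputable def b (x : ℝ) : ℕ → ℝ
  | 0 => 1
  | j+1 => b x j * ((((j:ℝ)+1/2)^2 - x^2) / ((2*(j:ℝ)+1)*(2*(j:ℝ)+2)))

noncomputable def Db (x : ℝ) : ℕ → ℝ
  | 0 => 0
  | j+1 => Db x j * ((((j:ℝ)+1/2)^2 - x^2) / ((2*(j:ℝ)+1)*(2*(j:ℝ)+2)))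
            + b x j * ((-2*x) / ((2*(j:ℝ)+1)*(2*(j:ℝ)+2)))

lemma den_ne (j : ℕ) : ((2*(j:ℝ)+1)*(2*(j:ℝ)+2)) ≠ 0 := by positivity

lemma c_two_mul (j : ℕ) (x : ℝ) :
    c (2*j) x = (1 / ((2*j).factorial : ℝ)) *
      ∏ i ∈ Finset.Icc 1 j, (x ^ 2 - ((2 * (i : ℝ) - 1) / 2) ^ 2) := by
  simp [c, Nat.mul_div_cancel_left, Nat.mul_mod_right]

lemma c_eq (j : ℕ) (x : ℝ) : c (2*j) x = (-1)^j * b x j := by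
  induction j with
  | zero => simp [c, b]
  | succ j ih =>
    have h1 : (2*(j+1)) = 2*j+1+1 := by ring
    rw [c_two_mul] at ih ⊢
    rw [Finset.prod_Icc_succ_top (Nat.le_add_left 1 j)]
    have hf : (((2*(j+1)).factorial : ℝ)) = ((2*(j:ℝ))+2) * ((2*(j:ℝ))+1) * ((2*j).factorial : ℝ) := by
      rw [h1]
      rw [Nat.factorial_succ, Nat.factorial_succ]
      push_cast
      ring
    rw [hf, b]
    have hne : (((2*j).factorial : ℝ)) ≠ 0 := Nat.cast_ne_zero.2 (Nat.factorial_ne_zero _)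
    field_simp at ih ⊢
    rw [ih]
    push_cast
    ring

lemma neg_one_pow_sub {d j : ℕ} (hj : j ≤ d) : (-1:ℝ)^d * (-1:ℝ)^(d-j) = (-1:ℝ)^j := by
  have : (-1:ℝ)^(d-j) * (-1:ℝ)^j = (-1:ℝ)^d := by
    rw [← pow_add, Nat.sub_add_cancel hj]
  have h2 : ((-1:ℝ)^(d-j))^2 = 1 := by
    rw [← pow_mul, mul_comm, pow_mul]; simp
  calc (-1:ℝ)^d * (-1:ℝ)^(d-j) = ((-1:ℝ)^(d-j))^2 * (-1:ℝ)^j := by rw [← this]; ring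
  _ = (-1:ℝ)^j := by rw [h2, one_mul]

lemma s_partial (d : ℕ) (x : ℝ) :
    (-1:ℝ)^d * s (2*d) x = ∑ j ∈ Finset.range (d+1), b x j := by
  have h2d : (2*d)/2 = d := by omega
  have h2m : (2*d) % 2 = 0 := by omega
  rw [s, h2d, h2m, Finset.mul_sum]
  refine Finset.sum_congr rfl fun j hj => ?_
  have hj' : j ≤ d := by simpa using Nat.lt_succ_iff.mp (Finset.mem_range.mp hj)
  rw [add_zero, c_eq, ← mul_assoc, ← mul_assoc, neg_one_pow_sub hj', ← pow_add]
  simp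





lemma hasDerivAt_b (j : ℕ) (x : ℝ) : HasDerivAt (fun y => b y j) (Db x j) x := by
  induction j with
  | zero => simpa [b, Db] using hasDerivAt_const x (1:ℝ)
  | succ j ih =>
    have h2 : HasDerivAt (fun y : ℝ => (((j:ℝ)+1/2)^2 - y^2) / ((2*(j:ℝ)+1)*(2*(j:ℝ)+2)))
        ((0 - 2*x^1) / ((2*(j:ℝ)+1)*(2*(j:ℝ)+2))) x :=
      (((hasDerivAt_const x (((j:ℝ)+1/2)^2)).sub (hasDerivAt_pow 2 x)).div_const _)
    have := ih.fun_mul h2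
    have heq : (fun y => b y (j+1))
        = fun y => b y j * ((((j:ℝ)+1/2)^2 - y^2) / ((2*(j:ℝ)+1)*(2*(j:ℝ)+2))) := by
      funext y; rw [b]
    rw [heq, Db]
    exact this.congr_deriv (by ring)

noncomputable def q (R : ℝ) (j : ℕ) : ℝ :=
  max (1/2) ((((j:ℝ)+1/2)^2 + R^2) / ((2*(j:ℝ)+1)*(2*(j:ℝ)+2)))

noncomputable def u (R : ℝ) : ℕ → ℝ
  | 0 => 1
  | j+1 => u R j * q R j

lemma q_half (R : ℝ) (j : ℕ) : 1/2 ≤ q R j := le_max_left _ _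

lemma q_nonneg (R : ℝ) (j : ℕ) : 0 ≤ q R j := le_trans (by norm_num) (q_half R j)

lemma u_nonneg (R : ℝ) (j : ℕ) : 0 ≤ u R j := by
  induction j with
  | zero => norm_num [u]
  | succ j ih => rw [u]; exact mul_nonneg ih (q_nonneg R j)

lemma abs_ratio_le {R x : ℝ} (hx : |x| ≤ R) (j : ℕ) :
    |(((j:ℝ)+1/2)^2 - x^2) / ((2*(j:ℝ)+1)*(2*(j:ℝ)+2))| ≤ q R j := by
  have hden : (0:ℝ) < (2*(j:ℝ)+1)*(2*(j:ℝ)+2) := by positivity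
  have hx2 : x^2 ≤ R^2 := by nlinarith [sq_abs x, abs_nonneg x]
  have hnum : |(((j:ℝ)+1/2)^2 - x^2)| ≤ (((j:ℝ)+1/2)^2 + R^2) := by
    rw [abs_sub_le_iff]
    constructor <;> nlinarith [sq_nonneg ((j:ℝ)+1/2), sq_nonneg x]
  rw [abs_div, abs_of_pos hden]
  refine le_trans ?_ (le_max_right _ _)
  gcongr

lemma b_le_u {R x : ℝ} (hx : |x| ≤ R) (j : ℕ) : |b x j| ≤ u R j := by
  induction j with
  | zero => norm_num [b, u]
  | succ j ih =>
    rw [b, u, abs_mul]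
    exact mul_le_mul ih (abs_ratio_le hx j) (abs_nonneg _) (u_nonneg R j)

lemma q_eq_half {R : ℝ} {j : ℕ} (hj : R^2 ≤ (j:ℝ)) : q R j = 1/2 := by
  have hden : (0:ℝ) < (2*(j:ℝ)+1)*(2*(j:ℝ)+2) := by positivity
  rw [q, max_eq_left]
  rw [div_le_iff₀ hden]
  nlinarith [sq_nonneg ((j:ℝ))]

lemma u_two_pow_mono (R : ℝ) : Monotone (fun j => u R j * 2^j) := by
  apply monotone_nat_of_le_succ
  intro j
  simp only [u, pow_succ]
  have h2j : (0:ℝ) ≤ 2^j := by positivity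
  have hu := u_nonneg R j
  have hq := q_half R j
  nlinarith [mul_le_mul_of_nonneg_right (mul_le_mul_of_nonneg_left hq hu) h2j]

lemma u_two_pow_const (R : ℝ) (m : ℕ) (hm : R^2 ≤ (m:ℝ)) :
    ∀ j, m ≤ j → u R j * 2^j = u R m * 2^m := by
  intro j hj
  induction j, hj using Nat.le_induction with
  | base => rfl
  | succ j hj ih =>
    have hq : q R j = 1/2 := q_eq_half (le_trans hm (by exact_mod_cast hj))
    rw [u, hq, pow_succ, ← ih]; ring

noncomputable def DD (R : ℝ) : ℝ := u R (⌈R^2⌉₊) * 2^(⌈R^2⌉₊)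

lemma u_le (R : ℝ) (j : ℕ) : u R j ≤ DD R * (1/2)^j := by
  have key : u R j * 2^j ≤ DD R := by
    rcases le_or_gt j (⌈R^2⌉₊) with h | h
    · exact u_two_pow_mono R h
    · rw [u_two_pow_const R (⌈R^2⌉₊) (Nat.le_ceil _) j h.le]; exact le_rfl
  have h2 : (0:ℝ) < 2^j := by positivity
  calc u R j = (u R j * 2^j) * (1/2)^j := by
        rw [one_div, inv_pow]; field_simp
  _ ≤ DD R * (1/2)^j := mul_le_mul_of_nonneg_right key (by positivity)

lemma DD_pos (R : ℝ) : 0 < DD R := by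
  have hu : ∀ j, 0 < u R j := by
    intro j
    induction j with
    | zero => norm_num [u]
    | succ j ih => rw [u]; exact mul_pos ih (lt_of_lt_of_le (by norm_num) (q_half R j))
  exact mul_pos (hu _) (by positivity)

lemma Db_le {R x : ℝ} (hR : 0 ≤ R) (hx : |x| ≤ R) (j : ℕ) :
    |Db x j| ≤ 4*R*(1 - 1/((j:ℝ)+1)) * u R j := by
  induction j with
  | zero => norm_num [Db]
  | succ j ih =>
    have hden : (0:ℝ) < (2*(j:ℝ)+1)*(2*(j:ℝ)+2) := by positivity
    have hu := u_nonneg R j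
    have hq2 := q_half R j
    have hqn := q_nonneg R j
    have hfrac : (0:ℝ) ≤ 1 - 1/((j:ℝ)+1) := by
      rw [sub_nonneg]
      rw [div_le_one (by positivity)]
      linarith [Nat.cast_nonneg (α := ℝ) j]
    have hA : |Db x j * ((((j:ℝ)+1/2)^2 - x^2) / ((2*(j:ℝ)+1)*(2*(j:ℝ)+2)))|
        ≤ (4*R*(1 - 1/((j:ℝ)+1)) * u R j) * q R j := by
      rw [abs_mul]
      exact mul_le_mul ih (abs_ratio_le hx j) (abs_nonneg _) (by positivity)
    have hB : |b x j * ((-2*x) / ((2*(j:ℝ)+1)*(2*(j:ℝ)+2)))|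
        ≤ u R j * (2*R/((2*(j:ℝ)+1)*(2*(j:ℝ)+2))) := by
      rw [abs_mul, abs_div, abs_of_pos hden]
      refine mul_le_mul (b_le_u hx j) ?_ (by positivity) hu
      gcongr
      calc |(-2*x)| = 2 * |x| := by rw [abs_mul, abs_neg, abs_two]
      _ ≤ 2 * R := by linarith
    have hstep : u R j * (2*R/((2*(j:ℝ)+1)*(2*(j:ℝ)+2)))
        ≤ 4*R*(1/(((j:ℝ)+1)*((j:ℝ)+2))) * (u R j * q R j) := by
      have hp : (0:ℝ) < ((j:ℝ)+1)*((j:ℝ)+2) := by positivity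
      have h5 : u R j * (2*R/((2*(j:ℝ)+1)*(2*(j:ℝ)+2))) ≤ u R j * (2*R/(((j:ℝ)+1)*((j:ℝ)+2))) := by
        gcongr <;> nlinarith [Nat.cast_nonneg (α := ℝ) j]
      refine h5.trans ?_
      have key : u R j * (2*R) ≤ 4*R*(u R j * q R j) := by nlinarith [mul_le_mul_of_nonneg_left hq2 (mul_nonneg (mul_nonneg (by norm_num : (0:ℝ) ≤ 4) hR) hu)]
      calc u R j * (2*R/(((j:ℝ)+1)*((j:ℝ)+2))) = (u R j * (2*R))/(((j:ℝ)+1)*((j:ℝ)+2)) := by ring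
      _ ≤ (4*R*(u R j * q R j))/(((j:ℝ)+1)*((j:ℝ)+2)) := by gcongr
      _ = 4*R*(1/(((j:ℝ)+1)*((j:ℝ)+2))) * (u R j * q R j) := by ring
    have e2 : 4*R*(1 - 1/((j:ℝ)+1)) + 4*R*(1/(((j:ℝ)+1)*((j:ℝ)+2))) = 4*R*(1-1/((j:ℝ)+2)) := by
      have h1 : ((j:ℝ)+1) ≠ 0 := by positivity
      have h2 : ((j:ℝ)+2) ≠ 0 := by positivity
      field_simp
      ring
    rw [Db, u]
    refine (abs_add_le _ _).trans ?_
    push_cast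
    have hsum := add_le_add hA (hB.trans hstep)
    have efin : 4*R*(1 - 1/((j:ℝ)+1)) * u R j * q R j + 4*R*(1/(((j:ℝ)+1)*((j:ℝ)+2))) * (u R j * q R j)
        = 4*R*(1-1/((j:ℝ)+2)) * (u R j * q R j) := by
      rw [← e2]; ring
    rw [show ((j:ℝ)+1+1) = ((j:ℝ)+2) by ring]
    linarith [hsum, efin]



noncomputable def A (θ : ℝ) : ℝ := 2 - 2*Real.cos θ

noncomputable def U (j : ℕ) (θ : ℝ) : ℝ := Real.cos (θ/2) * (A θ)^j

noncomputable def U1 (j : ℕ) (θ : ℝ) : ℝ :=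
  -Real.sin (θ/2) * (1/2) * (A θ)^j
  + Real.cos (θ/2) * ((j:ℝ) * (A θ)^(j-1) * (2*Real.sin θ))

noncomputable def U2 (j : ℕ) (θ : ℝ) : ℝ :=
  (-(Real.cos (θ/2) * (1/2)) * (1/2)) * (A θ)^j
  + (-Real.sin (θ/2) * (1/2)) * ((j:ℝ) * (A θ)^(j-1) * (2*Real.sin θ))
  + ( (-Real.sin (θ/2) * (1/2)) * ((j:ℝ) * (A θ)^(j-1) * (2*Real.sin θ))
      + Real.cos (θ/2) * ( (j:ℝ) * (((j-1:ℕ):ℝ) * (A θ)^(j-1-1) * (2*Real.sin θ)) * (2*Real.sin θ)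
                           + (j:ℝ) * (A θ)^(j-1) * (2*Real.cos θ) ) )

lemma hasDerivAt_A (θ : ℝ) : HasDerivAt A (2*Real.sin θ) θ := by
  have h := (Real.hasDerivAt_cos θ).const_mul (2:ℝ)
  have h2 := (hasDerivAt_const θ (2:ℝ)).sub h
  exact h2.congr_deriv (by ring)

lemma hasDerivAt_half (θ : ℝ) : HasDerivAt (fun t : ℝ => t/2) (1/2 : ℝ) θ := by
  simpa using (hasDerivAt_id θ).div_const 2

lemma hasDerivAt_cos_half (θ : ℝ) :
    HasDerivAt (fun t : ℝ => Real.cos (t/2)) (-Real.sin (θ/2) * (1/2)) θ :=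
  ((Real.hasDerivAt_cos (θ/2)).comp θ (hasDerivAt_half θ) :)

lemma hasDerivAt_sin_half (θ : ℝ) :
    HasDerivAt (fun t : ℝ => Real.sin (t/2)) (Real.cos (θ/2) * (1/2)) θ :=
  ((Real.hasDerivAt_sin (θ/2)).comp θ (hasDerivAt_half θ) :)

lemma hasDerivAt_Apow (j : ℕ) (θ : ℝ) :
    HasDerivAt (fun t => (A t)^j) ((j:ℝ) * (A θ)^(j-1) * (2*Real.sin θ)) θ :=
  (hasDerivAt_A θ).pow j

lemma hasDerivAt_U (j : ℕ) (θ : ℝ) : HasDerivAt (U j) (U1 j θ) θ :=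
  (hasDerivAt_cos_half θ).mul (hasDerivAt_Apow j θ)

lemma hasDerivAt_U1 (j : ℕ) (θ : ℝ) : HasDerivAt (U1 j) (U2 j θ) θ := by
  have h1 : HasDerivAt (fun t => -Real.sin (t/2) * (1/2) * (A t)^j)
      ((-(Real.cos (θ/2) * (1/2)) * (1/2)) * (A θ)^j
        + (-Real.sin (θ/2) * (1/2)) * ((j:ℝ) * (A θ)^(j-1) * (2*Real.sin θ))) θ :=
    (((hasDerivAt_sin_half θ).neg.mul_const (1/2:ℝ)).mul (hasDerivAt_Apow j θ))
  have h2a : HasDerivAt (fun t => (j:ℝ) * (A t)^(j-1) * (2*Real.sin t))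
      ( ((j:ℝ) * (((j-1:ℕ):ℝ) * (A θ)^(j-1-1) * (2*Real.sin θ))) * (2*Real.sin θ)
        + (j:ℝ) * (A θ)^(j-1) * (2*Real.cos θ)) θ :=
    ((hasDerivAt_Apow (j-1) θ).const_mul (j:ℝ)).mul ((Real.hasDerivAt_sin θ).const_mul 2)
  have h2 := (hasDerivAt_cos_half θ).mul h2a
  have := h1.add h2
  exact this

lemma cos_eq (θ : ℝ) : Real.cos θ = 1 - 2*Real.sin (θ/2)^2 := by
  rw [show θ = 2*(θ/2) by ring, Real.cos_two_mul]
  rw [show 2*(θ/2)/2 = θ/2 by ring]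
  linear_combination 2 * Real.sin_sq_add_cos_sq (θ/2)

lemma sin_eq (θ : ℝ) : Real.sin θ = 2*Real.sin (θ/2)*Real.cos (θ/2) := by
  rw [show θ = 2*(θ/2) by ring, Real.sin_two_mul]
  rw [show 2*(θ/2)/2 = θ/2 by ring]

lemma A_eq (θ : ℝ) : A θ = 4*Real.sin (θ/2)^2 := by
  rw [A, cos_eq]; ring

lemma U2_rec (j : ℕ) (θ : ℝ) :
    U2 j θ = (2*(j:ℝ))*(2*(j:ℝ)-1) * U (j-1) θ - ((2*(j:ℝ)+1)^2/4) * U j θ := by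
  match j with
  | 0 => simp [U2, U]; ring
  | 1 =>
    simp only [U2, U]
    norm_num
    rw [sin_eq θ, cos_eq θ, A_eq θ]
    ring
  | (k+2) =>
    simp only [U2, U, show k+2-1 = k+1 from rfl, show k+1-1 = k from rfl]
    simp only [pow_succ]
    generalize A θ ^ k = Y
    rw [sin_eq θ, cos_eq θ, A_eq θ]
    push_cast
    linear_combination (16*((k:ℝ)+2)*((k:ℝ)+1)*Real.sin (θ/2)^2*Real.cos (θ/2)*Y) *
      Real.sin_sq_add_cos_sq (θ/2)


lemma A_nonneg (θ : ℝ) : 0 ≤ A θ := by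
  have := Real.cos_le_one θ; simp only [A]; linarith

lemma A_le {θ : ℝ} (hθ : θ ∈ Set.Ioo (-(9/8):ℝ) (9/8)) : A θ ≤ 81/64 := by
  obtain ⟨h1, h2⟩ := hθ
  have h3 := Real.one_sub_sq_div_two_le_cos (x := θ)
  have h4 : θ^2 ≤ 81/64 := by nlinarith
  simp only [A]; nlinarith

lemma Apow_le {θ : ℝ} (hθ : θ ∈ Set.Ioo (-(9/8):ℝ) (9/8)) {k j : ℕ} (hkj : k ≤ j) :
    |(A θ)^k| ≤ (81/64:ℝ)^j := by
  rw [abs_pow, abs_of_nonneg (A_nonneg θ)]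
  exact (pow_le_pow_left₀ (A_nonneg θ) (A_le hθ) k).trans
    (pow_le_pow_right₀ (by norm_num) hkj)

lemma U_bound {θ : ℝ} (hθ : θ ∈ Set.Ioo (-(9/8):ℝ) (9/8)) (j : ℕ) :
    |U j θ| ≤ (81/64:ℝ)^j := by
  rw [U, abs_mul]
  have h1 := Real.abs_cos_le_one (θ/2)
  have h2 := Apow_le hθ (le_refl j)
  nlinarith [abs_nonneg ((A θ)^j), abs_nonneg (Real.cos (θ/2))]

lemma U1_bound {θ : ℝ} (hθ : θ ∈ Set.Ioo (-(9/8):ℝ) (9/8)) (j : ℕ) :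
    |U1 j θ| ≤ (2*(j:ℝ)+1) * (81/64:ℝ)^j := by
  have hk : (0:ℝ) ≤ (81/64:ℝ)^j := by positivity
  have hj : (0:ℝ) ≤ (j:ℝ) := Nat.cast_nonneg j
  have h1 : |(-Real.sin (θ/2) * (1/2)) * (A θ)^j| ≤ (1/2) * (81/64:ℝ)^j := by
    rw [abs_mul]
    have hs := Real.abs_sin_le_one (θ/2)
    have h2 := Apow_le hθ (le_refl j)
    have e : |(-Real.sin (θ/2) * (1/2))| = |Real.sin (θ/2)| * (1/2) := by
      rw [abs_mul, abs_neg]; norm_num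
    rw [e]
    nlinarith [abs_nonneg ((A θ)^j), abs_nonneg (Real.sin (θ/2))]
  have h2 : |Real.cos (θ/2) * ((j:ℝ) * (A θ)^(j-1) * (2*Real.sin θ))|
      ≤ 2*(j:ℝ) * (81/64:ℝ)^j := by
    rw [abs_mul, abs_mul, abs_mul]
    have hc := Real.abs_cos_le_one (θ/2)
    have hs := Real.abs_sin_le_one θ
    have hA := Apow_le hθ (Nat.sub_le j 1)
    have e : |(2*Real.sin θ)| = 2 * |Real.sin θ| := by rw [abs_mul, abs_two]
    rw [e, abs_of_nonneg hj]
    have hAn := abs_nonneg ((A θ)^(j-1))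
    have hsn := abs_nonneg (Real.sin θ)
    have hcn := abs_nonneg (Real.cos (θ/2))
    nlinarith [mul_nonneg hj hAn, mul_nonneg (mul_nonneg hj hAn) hsn,
      mul_nonneg hj hk, mul_nonneg (mul_nonneg hj hk) hsn]
  calc |U1 j θ| ≤ |(-Real.sin (θ/2) * (1/2)) * (A θ)^j|
        + |Real.cos (θ/2) * ((j:ℝ) * (A θ)^(j-1) * (2*Real.sin θ))| := by
        rw [U1]
        exact abs_add_le _ _
  _ ≤ (1/2) * (81/64:ℝ)^j + 2*(j:ℝ) * (81/64:ℝ)^j := add_le_add h1 h2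
  _ ≤ (2*(j:ℝ)+1) * (81/64:ℝ)^j := by nlinarith

lemma U2_bound {θ : ℝ} (hθ : θ ∈ Set.Ioo (-(9/8):ℝ) (9/8)) (j : ℕ) :
    |U2 j θ| ≤ 9*((j:ℝ)+1)^2 * (81/64:ℝ)^j := by
  rw [U2_rec]
  have hk : (0:ℝ) ≤ (81/64:ℝ)^j := by positivity
  have hj : (0:ℝ) ≤ (j:ℝ) := Nat.cast_nonneg j
  have hUm : |U (j-1) θ| ≤ (81/64:ℝ)^j :=
    (U_bound hθ (j-1)).trans (pow_le_pow_right₀ (by norm_num) (Nat.sub_le j 1))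
  have hUj := U_bound hθ j
  have h5 : |(2*(j:ℝ))*(2*(j:ℝ)-1)| ≤ (2*(j:ℝ))*(2*(j:ℝ)+1) := by
    rw [abs_mul, abs_of_nonneg (by linarith : (0:ℝ) ≤ 2*(j:ℝ))]
    have : |2*(j:ℝ)-1| ≤ 2*(j:ℝ)+1 := abs_le.mpr ⟨by linarith, by linarith⟩
    nlinarith
  have ht1 : |(2*(j:ℝ))*(2*(j:ℝ)-1) * U (j-1) θ| ≤ (2*(j:ℝ))*(2*(j:ℝ)+1) * (81/64:ℝ)^j := by
    rw [abs_mul]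
    exact mul_le_mul h5 hUm (abs_nonneg _) (by nlinarith)
  have ht2 : |((2*(j:ℝ)+1)^2/4) * U j θ| ≤ ((2*(j:ℝ)+1)^2/4) * (81/64:ℝ)^j := by
    rw [abs_mul, abs_of_nonneg (by positivity : (0:ℝ) ≤ (2*(j:ℝ)+1)^2/4)]
    exact mul_le_mul_of_nonneg_left hUj (by positivity)
  calc |(2*(j:ℝ))*(2*(j:ℝ)-1) * U (j-1) θ - ((2*(j:ℝ)+1)^2/4) * U j θ|
      ≤ |(2*(j:ℝ))*(2*(j:ℝ)-1) * U (j-1) θ| + |((2*(j:ℝ)+1)^2/4) * U j θ| := abs_sub _ _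
  _ ≤ (2*(j:ℝ))*(2*(j:ℝ)+1) * (81/64:ℝ)^j + ((2*(j:ℝ)+1)^2/4) * (81/64:ℝ)^j :=
      add_le_add ht1 ht2
  _ ≤ 9*((j:ℝ)+1)^2 * (81/64:ℝ)^j := by nlinarith

lemma summable_W (D : ℝ) : Summable (fun j : ℕ => D * (9*((j:ℝ)+1)^2 * (81/128:ℝ)^j)) := by
  apply Summable.mul_left
  have hr : ‖(81/128:ℝ)‖ < 1 := by
    rw [Real.norm_eq_abs, abs_of_nonneg (by norm_num : (0:ℝ) ≤ 81/128)]; norm_num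
  have h2 := summable_pow_mul_geometric_of_norm_lt_one 2 hr
  have h1 := summable_pow_mul_geometric_of_norm_lt_one 1 hr
  have h0 := summable_pow_mul_geometric_of_norm_lt_one 0 hr
  have := ((h2.mul_left 9).add ((h1.mul_left 18).add (h0.mul_left 9)))
  refine this.congr fun j => ?_
  push_cast
  ring

lemma bV_bound {x R V C : ℝ} {j : ℕ} (hb : |b x j| ≤ DD R * (1/2)^j)
    (hV : |V| ≤ C * (81/64:ℝ)^j) (hC : 0 ≤ C) (hC9 : C ≤ 9*((j:ℝ)+1)^2) :
    ‖b x j * V‖ ≤ DD R * (9*((j:ℝ)+1)^2 * (81/128:ℝ)^j) := by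
  rw [Real.norm_eq_abs, abs_mul]
  have hDD := (DD_pos R).le
  have step1 : |b x j| * |V| ≤ (DD R * (1/2)^j) * (C * (81/64:ℝ)^j) :=
    mul_le_mul hb hV (abs_nonneg _) (by positivity)
  refine step1.trans ?_
  have e : (DD R * (1/2)^j) * (C * (81/64:ℝ)^j) = DD R * (C * ((1/2 * (81/64))^j)) := by
    rw [mul_pow]; ring
  rw [e, show (1/2 * (81/64) : ℝ) = 81/128 by norm_num]
  have : C * (81/128:ℝ)^j ≤ (9*((j:ℝ)+1)^2) * (81/128:ℝ)^j :=
    mul_le_mul_of_nonneg_right hC9 (by positivity)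
  nlinarith [this, hDD]

lemma C1_le (j : ℕ) : (1:ℝ) ≤ 9*((j:ℝ)+1)^2 := by nlinarith [Nat.cast_nonneg (α := ℝ) j]
lemma C2_le (j : ℕ) : (2*(j:ℝ)+1) ≤ 9*((j:ℝ)+1)^2 := by nlinarith [Nat.cast_nonneg (α := ℝ) j]


lemma summable_quad_geom (a b c : ℝ) :
    Summable (fun j : ℕ => (a*(j:ℝ)^2 + b*(j:ℝ) + c) * (81/128:ℝ)^j) := by
  have hr : ‖(81/128:ℝ)‖ < 1 := by
    rw [Real.norm_eq_abs, abs_of_nonneg (by norm_num : (0:ℝ) ≤ 81/128)]; norm_num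
  have h2 := summable_pow_mul_geometric_of_norm_lt_one 2 hr
  have h1 := summable_pow_mul_geometric_of_norm_lt_one 1 hr
  have h0 := summable_pow_mul_geometric_of_norm_lt_one 0 hr
  have := ((h2.mul_left a).add ((h1.mul_left b).add (h0.mul_left c)))
  refine this.congr fun j => ?_
  push_cast
  ring

/-- The main identity. -/
lemma g_eq (x : ℝ) : ∑' j, b x j = 2 / Real.sqrt 3 * Real.cos (Real.pi * x / 3) := by
  set R := |x| with hRdef
  have hxR : |x| ≤ R := le_rfl
  have hb : ∀ j, |b x j| ≤ DD R * (1/2)^j := fun j => (b_le_u hxR j).trans (u_le R j)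
  set I : Set ℝ := Set.Ioo (-(9/8):ℝ) (9/8) with hIdef
  set W : ℕ → ℝ := fun j => DD R * (9*((j:ℝ)+1)^2 * (81/128:ℝ)^j) with hWdef
  have hW : Summable W := summable_W (DD R)
  have hb0 : ∀ (j : ℕ), ∀ θ ∈ I, ‖b x j * U j θ‖ ≤ W j := by
    intro j θ hθ
    refine bV_bound (hb j) (C := 1) ?_ (by norm_num) (C1_le j)
    rw [one_mul]; exact U_bound hθ j
  have hb1 : ∀ (j : ℕ), ∀ θ ∈ I, ‖b x j * U1 j θ‖ ≤ W j := fun j θ hθ =>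
    bV_bound (hb j) (U1_bound hθ j) (by positivity) (C2_le j)
  have hb2 : ∀ (j : ℕ), ∀ θ ∈ I, ‖b x j * U2 j θ‖ ≤ W j := fun j θ hθ =>
    bV_bound (hb j) (U2_bound hθ j) (by positivity) (le_refl _)
  have hsum0 : ∀ θ ∈ I, Summable (fun j => b x j * U j θ) := fun θ hθ =>
    Summable.of_norm_bounded hW (fun j => hb0 j θ hθ)
  have hsum1 : ∀ θ ∈ I, Summable (fun j => b x j * U1 j θ) := fun θ hθ =>
    Summable.of_norm_bounded hW (fun j => hb1 j θ hθ)
  have hsum2 : ∀ θ ∈ I, Summable (fun j => b x j * U2 j θ) := fun θ hθ =>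
    Summable.of_norm_bounded hW (fun j => hb2 j θ hθ)
  set y := fun t : ℝ => ∑' j, b x j * U j t with hydef
  set y1 := fun t : ℝ => ∑' j, b x j * U1 j t with hy1def
  set y2 := fun t : ℝ => ∑' j, b x j * U2 j t with hy2def
  have hopen : IsOpen I := isOpen_Ioo
  have hDy : ∀ θ ∈ I, HasDerivAt y (y1 θ) θ := by
    intro θ hθ
    exact hasDerivAt_of_tendstoUniformlyOn hopen
      (tendstoUniformlyOn_tsum_nat hW hb1)
      (Eventually.of_forall fun n t ht =>
        HasDerivAt.fun_sum fun j _ => ((hasDerivAt_U j t).const_mul (b x j)))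
      (fun t ht => ((hsum0 t ht).hasSum.tendsto_sum_nat)) hθ
  have hDy1 : ∀ θ ∈ I, HasDerivAt y1 (y2 θ) θ := by
    intro θ hθ
    exact hasDerivAt_of_tendstoUniformlyOn hopen
      (tendstoUniformlyOn_tsum_nat hW hb2)
      (Eventually.of_forall fun n t ht =>
        HasDerivAt.fun_sum fun j _ => ((hasDerivAt_U1 j t).const_mul (b x j)))
      (fun t ht => ((hsum1 t ht).hasSum.tendsto_sum_nat)) hθ
  have hODE : ∀ θ ∈ I, y2 θ = -x^2 * y θ := by
    intro θ hθ
    have hpow : ∀ k : ℕ, ((1:ℝ)/2)^k * (81/64:ℝ)^k = (81/128:ℝ)^k := fun k => by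
      rw [← mul_pow]; norm_num
    have hbU : ∀ j, |b x j * U j θ| ≤ DD R * (81/128:ℝ)^j := by
      intro j
      rw [abs_mul]
      calc |b x j| * |U j θ| ≤ (DD R * (1/2)^j) * (81/64:ℝ)^j :=
            mul_le_mul (hb j) (U_bound hθ j) (abs_nonneg _)
              (mul_nonneg (DD_pos R).le (by positivity))
      _ = DD R * (81/128:ℝ)^j := by rw [mul_assoc, hpow j]
    have hbUm : ∀ j, |b x j * U (j-1) θ| ≤ DD R * (81/128:ℝ)^j := by
      intro j
      rw [abs_mul]
      have hU : |U (j-1) θ| ≤ (81/64:ℝ)^j :=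
        (U_bound hθ (j-1)).trans (pow_le_pow_right₀ (by norm_num) (Nat.sub_le j 1))
      calc |b x j| * |U (j-1) θ| ≤ (DD R * (1/2)^j) * (81/64:ℝ)^j :=
            mul_le_mul (hb j) hU (abs_nonneg _)
              (mul_nonneg (DD_pos R).le (by positivity))
      _ = DD R * (81/128:ℝ)^j := by rw [mul_assoc, hpow j]
    have hG : Summable (fun j : ℕ => (2*(j:ℝ))*(2*(j:ℝ)-1) * (b x j * U (j-1) θ)) := by
      refine Summable.of_norm_bounded (summable_quad_geom (4*DD R) (2*DD R) 0) fun j => ?_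
      rw [Real.norm_eq_abs, abs_mul]
      have h5 : |(2*(j:ℝ))*(2*(j:ℝ)-1)| ≤ 4*(j:ℝ)^2+2*(j:ℝ) := by
        have hj : (0:ℝ) ≤ (j:ℝ) := Nat.cast_nonneg j
        rw [abs_mul, abs_of_nonneg (by linarith : (0:ℝ) ≤ 2*(j:ℝ))]
        have h6 : |2*(j:ℝ)-1| ≤ 2*(j:ℝ)+1 := abs_le.mpr ⟨by linarith, by linarith⟩
        nlinarith
      calc |(2*(j:ℝ))*(2*(j:ℝ)-1)| * |b x j * U (j-1) θ|
          ≤ (4*(j:ℝ)^2+2*(j:ℝ)) * (DD R * (81/128:ℝ)^j) :=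
            mul_le_mul h5 (hbUm j) (abs_nonneg _)
              (by nlinarith [Nat.cast_nonneg (α := ℝ) j, sq_nonneg ((j:ℝ))])
      _ = (4*DD R*(j:ℝ)^2 + 2*DD R*(j:ℝ) + 0) * (81/128:ℝ)^j := by ring
    have hH : Summable (fun j : ℕ => ((2*(j:ℝ)+1)^2/4) * (b x j * U j θ)) := by
      refine Summable.of_norm_bounded (summable_quad_geom (DD R) (DD R) (DD R/4)) fun j => ?_
      rw [Real.norm_eq_abs, abs_mul, abs_of_nonneg (by positivity : (0:ℝ) ≤ (2*(j:ℝ)+1)^2/4)]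
      calc ((2*(j:ℝ)+1)^2/4) * |b x j * U j θ|
          ≤ ((2*(j:ℝ)+1)^2/4) * (DD R * (81/128:ℝ)^j) :=
            mul_le_mul_of_nonneg_left (hbU j) (by positivity)
      _ = (DD R*(j:ℝ)^2 + DD R*(j:ℝ) + DD R/4) * (81/128:ℝ)^j := by ring
    have hterm : ∀ j : ℕ, b x j * U2 j θ
        = (2*(j:ℝ))*(2*(j:ℝ)-1) * (b x j * U (j-1) θ)
          - ((2*(j:ℝ)+1)^2/4) * (b x j * U j θ) := by
      intro j; rw [U2_rec]; ring
    have hG0 : (2*((0:ℕ):ℝ))*(2*((0:ℕ):ℝ)-1) * (b x 0 * U (0-1) θ) = 0 := by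
      norm_num
    have e2 : ∀ j : ℕ, (2*((j+1:ℕ):ℝ))*(2*((j+1:ℕ):ℝ)-1) * (b x (j+1) * U ((j+1)-1) θ)
        = (((j:ℝ)+1/2)^2 - x^2) * (b x j * U j θ) := by
      intro j
      rw [Nat.add_sub_cancel]
      show (2*((j+1:ℕ):ℝ))*(2*((j+1:ℕ):ℝ)-1)
        * ((b x j * ((((j:ℝ)+1/2)^2 - x^2) / ((2*(j:ℝ)+1)*(2*(j:ℝ)+2)))) * U j θ) = _
      have hden : ((2*(j:ℝ)+1)*(2*(j:ℝ)+2)) ≠ 0 := by positivity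
      push_cast
      field_simp
      ring
    have hG' : Summable (fun j : ℕ => (((j:ℝ)+1/2)^2 - x^2) * (b x j * U j θ)) := by
      refine ((summable_nat_add_iff 1).mpr hG).congr fun j => ?_
      exact e2 j
    calc y2 θ = ∑' j : ℕ, ((2*(j:ℝ))*(2*(j:ℝ)-1) * (b x j * U (j-1) θ)
          - ((2*(j:ℝ)+1)^2/4) * (b x j * U j θ)) := tsum_congr hterm
    _ = (∑' j : ℕ, (2*(j:ℝ))*(2*(j:ℝ)-1) * (b x j * U (j-1) θ))
          - ∑' j : ℕ, ((2*(j:ℝ)+1)^2/4) * (b x j * U j θ) := Summable.tsum_sub hG hH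
    _ = (∑' j : ℕ, (((j:ℝ)+1/2)^2 - x^2) * (b x j * U j θ))
          - ∑' j : ℕ, ((2*(j:ℝ)+1)^2/4) * (b x j * U j θ) := by
        congr 1
        rw [Summable.tsum_eq_zero_add hG, hG0, zero_add]
        exact tsum_congr e2
    _ = ∑' j : ℕ, ((((j:ℝ)+1/2)^2 - x^2) * (b x j * U j θ)
          - ((2*(j:ℝ)+1)^2/4) * (b x j * U j θ)) := (Summable.tsum_sub hG' hH).symm
    _ = ∑' j : ℕ, (-x^2) * (b x j * U j θ) := tsum_congr fun j => by ring
    _ = -x^2 * y θ := tsum_mul_left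
  have hy0 : y 0 = 1 := by
    have hz : ∀ j : ℕ, j ≠ 0 → b x j * U j 0 = 0 := by
      intro j hj
      have hA0 : A 0 = 0 := by simp [A]
      rw [U, hA0, zero_pow hj, mul_zero, mul_zero]
    rw [hydef]
    simp only
    rw [tsum_eq_single 0 hz]
    norm_num [b, U, A]
  have hy10 : y1 0 = 0 := by
    have hz : ∀ j : ℕ, b x j * U1 j 0 = 0 := by
      intro j
      have : U1 j 0 = 0 := by norm_num [U1]
      rw [this, mul_zero]
    rw [hy1def]
    simp only
    rw [tsum_congr hz, tsum_zero]
  have hπ : Real.pi < 3.15 := Real.pi_lt_d2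
  have hπ0 : 0 < Real.pi := Real.pi_pos
  have hIcc : Set.Icc (0:ℝ) (Real.pi/3) ⊆ I := by
    intro t ht
    refine ⟨by linarith [ht.1], ?_⟩
    have := ht.2
    linarith
  set w := fun t : ℝ => y t - Real.cos (x*t) with hwdef
  set w1 := fun t : ℝ => y1 t + x*Real.sin (x*t) with hw1def
  have hinner : ∀ t : ℝ, HasDerivAt (fun s : ℝ => x*s) x t := by
    intro t
    simpa using (hasDerivAt_id t).const_mul x
  have hw : ∀ t ∈ I, HasDerivAt w (w1 t) t := by
    intro t ht
    have h2 : HasDerivAt (fun s => Real.cos (x*s)) (-Real.sin (x*t)*x) t :=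
      ((Real.hasDerivAt_cos (x*t)).comp t (hinner t) :)
    have := (hDy t ht).fun_sub h2
    exact this.congr_deriv (by rw [hw1def]; ring)
  have hw1 : ∀ t ∈ I, HasDerivAt w1 (-x^2 * w t) t := by
    intro t ht
    have h2 : HasDerivAt (fun s => x*Real.sin (x*s)) ((Real.cos (x*t)*x)*x) t :=
      ((Real.hasDerivAt_sin (x*t)).comp t (hinner t)).const_mul x |>.congr_deriv (by ring)
    have h3 := (hDy1 t ht).fun_add h2
    rw [hODE t ht] at h3
    exact h3.congr_deriv (by rw [hwdef]; ring)
  set E := fun t : ℝ => w1 t^2 + x^2*(w t)^2 with hEdef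
  have hE : ∀ t ∈ I, HasDerivAt E 0 t := by
    intro t ht
    have h1 := (hw1 t ht).fun_pow 2
    have h2 := ((hw t ht).fun_pow 2).const_mul (x^2)
    have := h1.fun_add h2
    exact this.congr_deriv (by push_cast; ring)
  have hEcont : ContinuousOn E (Set.Icc 0 (Real.pi/3)) := fun t ht =>
    ((hE t (hIcc ht)).continuousAt).continuousWithinAt
  have hEconst := constant_of_has_deriv_right_zero hEcont
    (fun t ht => (hE t (hIcc (Set.mem_of_mem_of_subset ht Set.Ico_subset_Icc_self))).hasDerivWithinAt)
  have hE0 : E 0 = 0 := by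
    rw [hEdef]
    simp only
    rw [hw1def, hwdef]
    simp only
    rw [hy0, hy10]
    norm_num
  have hw1zero : ∀ t ∈ Set.Icc (0:ℝ) (Real.pi/3), w1 t = 0 := by
    intro t ht
    have h := hEconst t ht
    rw [hE0] at h
    have h' : w1 t^2 + x^2*(w t)^2 = 0 := h
    have h1 : w1 t^2 = 0 := by
      nlinarith [sq_nonneg (w1 t), sq_nonneg (w t), sq_nonneg x,
        mul_nonneg (sq_nonneg x) (sq_nonneg (w t))]
    exact pow_eq_zero_iff (two_ne_zero) |>.mp h1
  have hwcont : ContinuousOn w (Set.Icc 0 (Real.pi/3)) := fun t ht =>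
    ((hw t (hIcc ht)).continuousAt).continuousWithinAt
  have hwconst := constant_of_has_deriv_right_zero hwcont
    (fun t ht => by
      have h := (hw t (hIcc (Set.mem_of_mem_of_subset ht Set.Ico_subset_Icc_self))).hasDerivWithinAt (s := Set.Ici t)
      rwa [hw1zero t (Set.mem_of_mem_of_subset ht Set.Ico_subset_Icc_self)] at h)
  have hwpi : w (Real.pi/3) = w 0 :=
    hwconst (Real.pi/3) ⟨by positivity, le_refl _⟩
  have hw0 : w 0 = 0 := by
    rw [hwdef]; simp only
    rw [hy0]; norm_num
  have hy_pi : y (Real.pi/3) = Real.cos (x*(Real.pi/3)) := by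
    have : w (Real.pi/3) = 0 := by rw [hwpi, hw0]
    rw [hwdef] at this
    simp only at this
    linarith [this]
  have hUpi : ∀ j : ℕ, U j (Real.pi/3) = Real.sqrt 3 / 2 := by
    intro j
    have hA1 : A (Real.pi/3) = 1 := by
      rw [A, Real.cos_pi_div_three]; norm_num
    rw [U, hA1, one_pow, mul_one, show (Real.pi/3)/2 = Real.pi/6 by ring, Real.cos_pi_div_six]
  have heval : y (Real.pi/3) = (∑' j, b x j) * (Real.sqrt 3 / 2) := by
    rw [hydef]
    simp only
    rw [tsum_congr (fun j => by rw [hUpi j])]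
    exact tsum_mul_right
  have hs3 : (0:ℝ) < Real.sqrt 3 := Real.sqrt_pos.mpr (by norm_num)
  have hkey : (∑' j, b x j) * (Real.sqrt 3 / 2) = Real.cos (x*(Real.pi/3)) := by
    rw [← heval, hy_pi]
  have : (∑' j, b x j) = Real.cos (x*(Real.pi/3)) * 2 / Real.sqrt 3 := by
    field_simp at hkey ⊢
    linarith [hkey]
  rw [this, show x*(Real.pi/3) = Real.pi*x/3 by ring]
  ring


lemma summable_half_geom : Summable (fun j : ℕ => ((1:ℝ)/2)^j) :=
  summable_geometric_of_lt_one (by norm_num) (by norm_num)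

lemma Db_le' {R x : ℝ} (hR : 0 ≤ R) (hx : |x| ≤ R) (j : ℕ) :
    |Db x j| ≤ 4*R*DD R * (1/2)^j := by
  refine (Db_le hR hx j).trans ?_
  have h1 : (0:ℝ) ≤ 1 - 1/((j:ℝ)+1) := by
    rw [sub_nonneg, div_le_one (by positivity)]
    linarith [Nat.cast_nonneg (α := ℝ) j]
  have h2 : 1 - 1/((j:ℝ)+1) ≤ 1 := by
    have : (0:ℝ) < 1/((j:ℝ)+1) := by positivity
    linarith
  have h3 := u_nonneg R j
  have h4 := (u_le R j)
  have h5 : 4*R*(1 - 1/((j:ℝ)+1)) * u R j ≤ 4*R*1*u R j := by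
    apply mul_le_mul_of_nonneg_right _ h3
    apply mul_le_mul_of_nonneg_left h2 (by linarith)
  refine h5.trans ?_
  calc 4*R*1*u R j = 4*R*u R j := by ring
  _ ≤ 4*R*(DD R*(1/2)^j) := mul_le_mul_of_nonneg_left h4 (by linarith)
  _ = 4*R*DD R*(1/2)^j := by ring

lemma summable_b {x R : ℝ} (hx : |x| ≤ R) : Summable (fun j => b x j) :=
  Summable.of_norm_bounded (summable_half_geom.mul_left (DD R))
    (fun j => by rw [Real.norm_eq_abs]; exact (b_le_u hx j).trans (u_le R j))

lemma hasDerivAt_g (x : ℝ) :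
    HasDerivAt (fun t => ∑' j, b t j) (∑' j, Db x j) x := by
  set R := |x| + 1 with hRdef
  have hR0 : (0:ℝ) ≤ R := by positivity
  have hx : x ∈ Set.Ioo (-R) R := by
    constructor <;> cases abs_cases x <;> simp [hRdef] <;> linarith [abs_nonneg x]
  have hmem : ∀ t ∈ Set.Ioo (-R) R, |t| ≤ R := fun t ht => (abs_lt.mpr ⟨ht.1, ht.2⟩).le
  refine hasDerivAt_of_tendstoUniformlyOn isOpen_Ioo
    (tendstoUniformlyOn_tsum_nat ((summable_half_geom.mul_left (4*R*DD R)))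
      (fun j t ht => by rw [Real.norm_eq_abs]; exact Db_le' hR0 (hmem t ht) j))
    (Eventually.of_forall fun n t ht => HasDerivAt.fun_sum fun j _ => hasDerivAt_b j t)
    (fun t ht => ((summable_b (hmem t ht)).hasSum.tendsto_sum_nat)) hx

lemma Db_tsum_eq (x : ℝ) :
    ∑' j, Db x j = -(2 * Real.pi / (3 * Real.sqrt 3)) * Real.sin (Real.pi * x / 3) := by
  have h1 := hasDerivAt_g x
  have h2 : (fun t : ℝ => ∑' j, b t j) = (fun t => 2/Real.sqrt 3 * Real.cos (Real.pi*t/3)) :=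
    funext g_eq
  rw [h2] at h1
  have hin : HasDerivAt (fun t : ℝ => Real.pi*t/3) (Real.pi/3) x := by
    simpa using ((hasDerivAt_id x).const_mul Real.pi).div_const 3
  have h3 : HasDerivAt (fun t : ℝ => 2/Real.sqrt 3 * Real.cos (Real.pi*t/3))
      (2/Real.sqrt 3 * (-Real.sin (Real.pi*x/3) * (Real.pi/3))) x :=
    ((Real.hasDerivAt_cos (Real.pi*x/3)).comp x hin).const_mul (2/Real.sqrt 3)
  have h4 := h1.unique h3
  rw [h4]
  ring

lemma s_funext (d : ℕ) : s (2*d)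
    = fun y => ∑ j ∈ Finset.range (d+1), (-1:ℝ)^(d-j) * ((-1:ℝ)^j * b y j) := by
  funext y
  have h2d : (2*d)/2 = d := by omega
  have h2m : (2*d) % 2 = 0 := by omega
  rw [s, h2d, h2m]
  exact Finset.sum_congr rfl fun j _ => by rw [add_zero, c_eq]

lemma hasDerivAt_s (d : ℕ) (z : ℝ) :
    HasDerivAt (s (2*d))
      (∑ j ∈ Finset.range (d+1), (-1:ℝ)^(d-j) * ((-1:ℝ)^j * Db z j)) z := by
  rw [s_funext]
  exact HasDerivAt.fun_sum fun j _ => ((hasDerivAt_b j z).const_mul ((-1:ℝ)^j)).const_mul _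

lemma s_deriv (d : ℕ) (z : ℝ) :
    (-1:ℝ)^d * deriv (s (2*d)) z = ∑ j ∈ Finset.range (d+1), Db z j := by
  rw [(hasDerivAt_s d z).deriv, Finset.mul_sum]
  refine Finset.sum_congr rfl fun j hj => ?_
  have hj' : j ≤ d := Nat.lt_succ_iff.mp (Finset.mem_range.mp hj)
  rw [← mul_assoc, ← mul_assoc, neg_one_pow_sub hj', ← pow_add]
  simp [← two_mul, pow_mul]

theorem main_result :
    TendstoLocallyUniformly (fun (d : ℕ) (x : ℝ) => (-1 : ℝ) ^ d * s (2 * d) x)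
      (fun x : ℝ => 2 / Real.sqrt 3 * Real.cos (Real.pi * x / 3)) Filter.atTop ∧
    TendstoLocallyUniformly (fun (d : ℕ) (x : ℝ) => (-1 : ℝ) ^ d * deriv (s (2 * d)) x)
      (fun x : ℝ => -(2 * Real.pi / (3 * Real.sqrt 3)) * Real.sin (Real.pi * x / 3))
      Filter.atTop := by
  constructor
  · rw [tendstoLocallyUniformly_iff_forall_isCompact]
    intro K hK
    obtain ⟨r, hr⟩ := hK.isBounded.subset_closedBall 0
    set R := |r| with hRdef
    have hmem : ∀ z ∈ K, |z| ≤ R := by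
      intro z hz
      have := hr hz
      rw [Metric.mem_closedBall, Real.dist_eq, sub_zero] at this
      exact this.trans (le_abs_self r)
    have ht := tendstoUniformlyOn_tsum_nat (f := fun j z => b z j)
      (summable_half_geom.mul_left (DD R))
      (fun j z hz => by rw [Real.norm_eq_abs]; exact (b_le_u (hmem z hz) j).trans (u_le R j))
    have hlim : (fun z : ℝ => ∑' j, b z j)
        = (fun z => 2/Real.sqrt 3 * Real.cos (Real.pi*z/3)) := funext g_eq
    rw [hlim] at ht
    have ht2 : TendstoUniformlyOn (fun d z => ∑ j ∈ Finset.range (d+1), b z j)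
        (fun z => 2/Real.sqrt 3 * Real.cos (Real.pi*z/3)) atTop K :=
      fun v hv => (tendsto_add_atTop_nat 1).eventually (ht v hv)
    exact ht2.congr (Eventually.of_forall fun d z hz => (s_partial d z).symm)
  · rw [tendstoLocallyUniformly_iff_forall_isCompact]
    intro K hK
    obtain ⟨r, hr⟩ := hK.isBounded.subset_closedBall 0
    set R := |r| with hRdef
    have hR0 : (0:ℝ) ≤ R := abs_nonneg r
    have hmem : ∀ z ∈ K, |z| ≤ R := by
      intro z hz
      have := hr hz
      rw [Metric.mem_closedBall, Real.dist_eq, sub_zero] at this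
      exact this.trans (le_abs_self r)
    have ht := tendstoUniformlyOn_tsum_nat (f := fun j z => Db z j)
      (summable_half_geom.mul_left (4*R*DD R))
      (fun j z hz => by rw [Real.norm_eq_abs]; exact Db_le' hR0 (hmem z hz) j)
    have hlim : (fun z : ℝ => ∑' j, Db z j)
        = (fun z => -(2 * Real.pi / (3 * Real.sqrt 3)) * Real.sin (Real.pi * z / 3)) :=
      funext Db_tsum_eq
    rw [hlim] at ht
    have ht2 : TendstoUniformlyOn (fun d z => ∑ j ∈ Finset.range (d+1), Db z j)
        (fun z => -(2 * Real.pi / (3 * Real.sqrt 3)) * Real.sin (Real.pi * z / 3)) atTop K :=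
      fun v hv => (tendsto_add_atTop_nat 1).eventually (ht v hv)
    exact ht2.congr (Eventually.of_forall fun d z hz => (s_deriv d z).symm)


end SP

/-- `(−1)^d s_{2d}` converges locally uniformly on `ℝ` to `(2/√3) cos(πx/3)`, and the
derivatives `(−1)^d s_{2d}′` converge locally uniformly to `−(2π/(3√3)) sin(πx/3)`. -/
theorem s_even_tendstoLocallyUniformly :
    TendstoLocallyUniformly (fun (d : ℕ) (x : ℝ) => (-1 : ℝ) ^ d * s (2 * d) x)
      (fun x : ℝ => 2 / Real.sqrt 3 * Real.cos (Real.pi * x / 3)) Filter.atTop ∧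
    TendstoLocallyUniformly (fun (d : ℕ) (x : ℝ) => (-1 : ℝ) ^ d * deriv (s (2 * d)) x)
      (fun x : ℝ => -(2 * Real.pi / (3 * Real.sqrt 3)) * Real.sin (Real.pi * x / 3))
      Filter.atTop :=
  SP.main_result
end

section
/- For every integer d ≥ 3 and every real number x of the form x = (d+1)/2 + m with m ∈ ℤ and x ≥ (d+7)/2, one has s_d(x) ≥ 3x. -/
open Finset

lemma prod_odd (j : ℕ) (x : ℝ) :
    x * ∏ i ∈ Icc 1 j, (x ^ 2 - (i : ℝ) ^ 2)
      = ∏ i ∈ range (2 * j + 1), (x + (j : ℝ) - (i : ℝ)) := by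
  induction j with
  | zero => simp
  | succ j ih =>
    rw [Finset.prod_Icc_succ_top (Nat.le_add_left 1 j)]
    have h1 : 2 * (j + 1) + 1 = (2 * j + 1) + 1 + 1 := by ring
    rw [h1, prod_range_succ, prod_range_succ']
    have h2 : (∏ i ∈ range (2 * j + 1), (x + (((j:ℕ)+1 : ℕ) : ℝ) - ((i + 1 : ℕ) : ℝ)))
        = ∏ i ∈ range (2 * j + 1), (x + (j : ℝ) - (i : ℝ)) := by
      apply Finset.prod_congr rfl; intro i _; push_cast; ring
    rw [h2]
    push_cast
    linear_combination (x ^ 2 - ((j:ℝ)+1) ^ 2) * ih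

lemma prod_even (j : ℕ) (x : ℝ) :
    (∏ i ∈ Icc 1 j, (x ^ 2 - ((2 * (i : ℝ) - 1) / 2) ^ 2))
      = ∏ i ∈ range (2 * j), (x + (2 * (j : ℝ) - 1) / 2 - (i : ℝ)) := by
  induction j with
  | zero => simp
  | succ j ih =>
    rw [Finset.prod_Icc_succ_top (Nat.le_add_left 1 j)]
    have h1 : 2 * (j + 1) = (2 * j) + 1 + 1 := by ring
    rw [h1, prod_range_succ, prod_range_succ']
    have h2 : (∏ i ∈ range (2 * j), (x + (2 * (((j:ℕ)+1 : ℕ)) - 1 : ℝ) / 2 - ((i + 1 : ℕ) : ℝ)))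
        = ∏ i ∈ range (2 * j), (x + (2 * (j : ℝ) - 1) / 2 - (i : ℝ)) := by
      apply Finset.prod_congr rfl; intro i _; push_cast; ring
    push_cast at h2 ⊢
    rw [h2]
    linear_combination (x ^ 2 - ((2 * ((j:ℝ)+1) - 1) / 2) ^ 2) * ih

lemma cP (d : ℕ) (x : ℝ) :
    c d x = ((d.factorial : ℝ))⁻¹ * ∏ i ∈ range d, (x + ((d : ℝ) - 1) / 2 - (i : ℝ)) := by
  rcases Nat.even_or_odd d with ⟨j, hj⟩ | ⟨j, hj⟩
  · subst hj
    have h2 : j + j = 2 * j := by ring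
    rw [h2]
    have hm : (2 * j) % 2 = 0 := by omega
    have hd : (2 * j) / 2 = j := by omega
    rw [c, if_pos hm, hd, prod_even, one_div]
    congr 1
    apply Finset.prod_congr rfl; intro i _; push_cast; ring
  · subst hj
    have hm : (2 * j + 1) % 2 = 1 := by omega
    have hd : (2 * j + 1) / 2 = j := by omega
    rw [c, if_neg (by omega), hd, one_div, mul_assoc, prod_odd]
    congr 1
    apply Finset.prod_congr rfl; intro i _; push_cast; ring

lemma pascal_c (e : ℕ) (x : ℝ) :
    c (e + 1) x = c (e + 1) (x - 1) + c e (x - 1/2) := by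
  rw [cP, cP, cP]
  rw [prod_range_succ' (fun i => x + ((↑(e+1) : ℝ) - 1) / 2 - (i : ℝ))]
  rw [prod_range_succ  (fun i => (x - 1) + ((↑(e+1) : ℝ) - 1) / 2 - (i : ℝ))]
  have h2 : (∏ i ∈ range e, (x + ((↑(e+1) : ℝ) - 1) / 2 - ((i + 1 : ℕ) : ℝ)))
      = ∏ i ∈ range e, (x - 1 + ((e : ℝ) + 1 - 1) / 2 - (i : ℝ)) := by
    apply Finset.prod_congr rfl; intro i _; push_cast; ring
  have h3 : (∏ i ∈ range e, (x - 1/2 + ((e : ℝ) - 1) / 2 - (i : ℝ)))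
      = ∏ i ∈ range e, (x - 1 + ((e : ℝ) + 1 - 1) / 2 - (i : ℝ)) := by
    apply Finset.prod_congr rfl; intro i _; push_cast; ring
  push_cast at h2 h3 ⊢
  rw [h2, h3]
  have hf : ((e.factorial : ℝ)) ≠ 0 := Nat.cast_ne_zero.mpr e.factorial_ne_zero
  have hf1 : (((e+1).factorial : ℝ)) = ((e : ℝ) + 1) * (e.factorial : ℝ) := by
    rw [Nat.factorial_succ]; push_cast; ring
  push_cast at hf1
  rw [hf1]
  field_simp
  ring



lemma c_zero (x : ℝ) : c 0 x = 1 := by simp [c]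

lemma pascal_s (e : ℕ) (x : ℝ) :
    s (e + 1) x = s (e + 1) (x - 1) + s e (x - 1/2) := by
  rcases Nat.even_or_odd e with ⟨k, hk⟩ | ⟨k, hk⟩
  · -- e = 2k, d = 2k+1 odd
    subst hk
    have h2 : k + k = 2 * k := by ring
    rw [h2]
    have hd1 : (2 * k + 1) / 2 = k := by omega
    have hm1 : (2 * k + 1) % 2 = 1 := by omega
    have hd0 : (2 * k) / 2 = k := by omega
    have hm0 : (2 * k) % 2 = 0 := by omega
    rw [s, s, s, hd1, hm1, hd0, hm0, ← Finset.sum_add_distrib]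
    apply Finset.sum_congr rfl
    intro j _
    rw [pascal_c (2 * j) x]
    ring
  · -- e = 2k+1, d = 2k+2 even
    subst hk
    have hd1 : (2 * k + 1 + 1) / 2 = k + 1 := by omega
    have hm1 : (2 * k + 1 + 1) % 2 = 0 := by omega
    have hd0 : (2 * k + 1) / 2 = k := by omega
    have hm0 : (2 * k + 1) % 2 = 1 := by omega
    rw [s, s, s, hd1, hm1, hd0, hm0]
    rw [Finset.sum_range_succ' (fun j => (-1:ℝ) ^ (k + 1 - j) * c (2 * j + 0) x)]
    rw [Finset.sum_range_succ' (fun j => (-1:ℝ) ^ (k + 1 - j) * c (2 * j + 0) (x - 1))]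
    simp only [Nat.succ_sub_succ, mul_zero, zero_add, Nat.add_sub_cancel] -- tidy
    rw [c_zero, c_zero]
    have key : ∀ j, j ∈ range (k + 1) →
        (-1:ℝ) ^ (k - j) * c (2 * (j + 1) + 0) x
          = (-1:ℝ) ^ (k - j) * c (2 * (j + 1) + 0) (x - 1)
            + (-1:ℝ) ^ (k - j) * c (2 * j + 1) (x - 1/2) := by
      intro j _
      have := pascal_c (2 * j + 1) x
      have he : 2 * j + 1 + 1 = 2 * (j + 1) + 0 := by ring
      rw [he] at this
      rw [this]
      ring
    rw [Finset.sum_congr rfl key, Finset.sum_add_distrib]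
    ring

lemma s_telescope (e : ℕ) (x : ℝ) : s (e + 2) x = c (e + 2) x - s e x := by
  have hd : (e + 2) / 2 = e / 2 + 1 := by omega
  have hm : (e + 2) % 2 = e % 2 := by omega
  rw [s, s, hd, hm, Finset.sum_range_succ]
  have h1 : 2 * (e / 2 + 1) + e % 2 = e + 2 := by omega
  have h2 : ∀ j, j ∈ range (e / 2 + 1) →
      (-1:ℝ) ^ (e / 2 + 1 - j) * c (2 * j + e % 2) x
        = -((-1:ℝ) ^ (e / 2 - j) * c (2 * j + e % 2) x) := by
    intro j hj
    simp only [mem_range] at hj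
    have : e / 2 + 1 - j = (e / 2 - j) + 1 := by omega
    rw [this, pow_succ]
    ring
  rw [Finset.sum_congr rfl h2, h1, Finset.sum_neg_distrib]
  simp
  ring

lemma prod_desc (d : ℕ) : (∏ i ∈ range d, ((d : ℝ) - (i : ℝ))) = d.factorial := by
  induction d with
  | zero => simp
  | succ d ih =>
    rw [prod_range_succ' (fun i => ((↑(d+1) : ℝ) - (i : ℝ)))]
    have h2 : (∏ i ∈ range d, ((↑(d+1) : ℝ) - ((i + 1 : ℕ) : ℝ)))
        = ∏ i ∈ range d, ((d : ℝ) - (i : ℝ)) := by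
      apply Finset.prod_congr rfl; intro i _; push_cast; ring
    push_cast at h2 ⊢
    rw [h2, ih, Nat.factorial_succ]
    push_cast
    ring

lemma c_edge (d : ℕ) : c d (((d : ℝ) + 1) / 2) = 1 := by
  rw [cP]
  have h2 : (∏ i ∈ range d, (((d : ℝ) + 1) / 2 + ((d : ℝ) - 1) / 2 - (i : ℝ)))
      = ∏ i ∈ range d, ((d : ℝ) - (i : ℝ)) := by
    apply Finset.prod_congr rfl; intro i _; ring
  rw [h2, prod_desc]
  have hf : ((d.factorial : ℝ)) ≠ 0 := Nat.cast_ne_zero.mpr d.factorial_ne_zero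
  field_simp

lemma s_zero (x : ℝ) : s 0 x = 1 := by simp [s, c]

lemma s_one (x : ℝ) : s 1 x = x := by simp [s, c]

lemma s_two (x : ℝ) : s 2 x = (x ^ 2 - 1/4) / 2 - 1 := by
  rw [s]
  norm_num [Finset.sum_range_succ, c, Finset.Icc_self, Nat.factorial]
  ring

lemma s_three (x : ℝ) : s 3 x = x * (x ^ 2 - 1) / 6 - x := by
  rw [s]
  norm_num [Finset.sum_range_succ, c, Finset.Icc_self, Nat.factorial]
  ring



noncomputable def v (n : ℕ) : ℝ :=
  if n = 0 then 1 else if n = 1 then 2 else if n = 2 then 2 else if n = 3 then 1 else 0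

noncomputable def w (n : ℕ) : ℝ :=
  if n = 0 then 0 else if n = 1 then 1 else if n = 2 then 2 else if n = 3 then 2
  else if n = 4 then 1 else 0

lemma v_nonneg (n : ℕ) : 0 ≤ v n := by unfold v; split_ifs <;> norm_num

lemma w_nonneg (n : ℕ) : 0 ≤ w n := by unfold w; split_ifs <;> norm_num

/-- column m = 1 : `s d ((d+3)/2) = v (d % 6)` (paired induction). -/
lemma col1 (d : ℕ) : s d (((d : ℝ) + 3) / 2) = v (d % 6)
    ∧ s (d + 1) (((d : ℝ) + 4) / 2) = v ((d + 1) % 6) := by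
  induction d with
  | zero =>
    constructor
    · rw [s_zero]; norm_num [v]
    · have : ((0 : ℕ) : ℝ) + 4 = 4 := by norm_num
      rw [this, s_one]; norm_num [v]
  | succ d ih =>
    obtain ⟨h1, h2⟩ := ih
    have h2' : s (d + 1) (((↑(d + 1) : ℝ) + 3) / 2) = v ((d + 1) % 6) := by
      have : ((↑(d + 1) : ℝ) + 3) / 2 = ((d : ℝ) + 4) / 2 := by push_cast; ring
      rw [this]; exact h2
    refine ⟨h2', ?_⟩
    have hp := pascal_s (d + 1) (((↑(d + 1) : ℝ) + 4) / 2)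
    have e1 : ((↑(d + 1) : ℝ) + 4) / 2 - 1 = ((d : ℝ) + 3) / 2 := by push_cast; ring
    have e2 : ((↑(d + 1) : ℝ) + 4) / 2 - 1/2 = ((d : ℝ) + 4) / 2 := by push_cast; ring
    rw [e1, e2] at hp
    have ht := s_telescope d (((d : ℝ) + 3) / 2)
    have hce : c (d + 2) (((d : ℝ) + 3) / 2) = 1 := by
      have : ((d : ℝ) + 3) / 2 = ((↑(d + 2) : ℝ) + 1) / 2 := by push_cast; ring
      rw [this]; exact c_edge (d + 2)
    rw [hce, h1] at ht
    rw [ht, h2] at hp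
    have key : s (d + 1 + 1) (((↑(d + 1) : ℝ) + 4) / 2) = 1 - v (d % 6) + v ((d + 1) % 6) := by
      linarith [hp]
    rw [key]
    have h6 : d % 6 = 0 ∨ d % 6 = 1 ∨ d % 6 = 2 ∨ d % 6 = 3 ∨ d % 6 = 4 ∨ d % 6 = 5 := by omega
    rcases h6 with h | h | h | h | h | h <;>
      · have e3 : (d + 1) % 6 = (d % 6 + 1) % 6 := by omega
        have e4 : (d + 1 + 1) % 6 = (d % 6 + 2) % 6 := by omega
        rw [e3, e4, h]; norm_num [v]

/-- column m = 2 : `s d ((d+5)/2) = d + 1 + w (d % 6)`. -/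
lemma col2 (d : ℕ) : s d (((d : ℝ) + 5) / 2) = (d : ℝ) + 1 + w (d % 6) := by
  induction d with
  | zero => rw [s_zero]; norm_num [w]
  | succ d ih =>
    have hp := pascal_s d (((↑(d + 1) : ℝ) + 5) / 2)
    have e1 : ((↑(d + 1) : ℝ) + 5) / 2 - 1 = ((d : ℝ) + 4) / 2 := by push_cast; ring
    have e2 : ((↑(d + 1) : ℝ) + 5) / 2 - 1/2 = ((d : ℝ) + 5) / 2 := by push_cast; ring
    rw [e1, e2, (col1 d).2, ih] at hp
    rw [hp]
    have h6 : d % 6 = 0 ∨ d % 6 = 1 ∨ d % 6 = 2 ∨ d % 6 = 3 ∨ d % 6 = 4 ∨ d % 6 = 5 := by omega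
    rcases h6 with h | h | h | h | h | h <;>
      · have e3 : (d + 1) % 6 = (d % 6 + 1) % 6 := by omega
        rw [e3, h]; push_cast; norm_num [v, w]; try ring



/-- nonnegativity for columns m ≥ 2. -/
lemma s_nonneg : ∀ d : ℕ, ∀ m : ℕ, 2 ≤ m → 0 ≤ s d (((d : ℝ) + 1) / 2 + (m : ℝ)) := by
  intro d
  induction d with
  | zero => intro m _; rw [s_zero]; norm_num
  | succ d ih =>
    intro m hm
    induction m, hm using Nat.le_induction with
    | base =>
      have e : ((↑(d + 1) : ℝ) + 1) / 2 + (2 : ℕ) = ((↑(d + 1) : ℝ) + 5) / 2 := by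
        push_cast; ring
      rw [e, col2]
      have := w_nonneg ((d + 1) % 6)
      positivity
    | succ m hm ihm =>
      have hp := pascal_s d (((↑(d + 1) : ℝ) + 1) / 2 + (↑(m + 1) : ℝ))
      have e1 : ((↑(d + 1) : ℝ) + 1) / 2 + (↑(m + 1) : ℝ) - 1
          = ((↑(d + 1) : ℝ) + 1) / 2 + (m : ℝ) := by push_cast; ring
      have e2 : ((↑(d + 1) : ℝ) + 1) / 2 + (↑(m + 1) : ℝ) - 1/2
          = ((d : ℝ) + 1) / 2 + (↑(m + 1) : ℝ) := by push_cast; ring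
      rw [e1, e2] at hp
      rw [hp]
      have h1 := ihm
      have h2 := ih (m + 1) (by omega)
      linarith

/-- column m = 3 is at least 9 for d ≥ 2. -/
lemma col3_ge : ∀ d : ℕ, 2 ≤ d → (9 : ℝ) ≤ s d (((d : ℝ) + 7) / 2) := by
  intro d hd
  induction d, hd using Nat.le_induction with
  | base =>
    rw [show (((2 : ℕ) : ℝ) + 7) / 2 = 9/2 by norm_num, s_two]; norm_num
  | succ d hd ih =>
    have hp := pascal_s d (((↑(d + 1) : ℝ) + 7) / 2)
    have e1 : ((↑(d + 1) : ℝ) + 7) / 2 - 1 = ((↑(d + 1) : ℝ) + 5) / 2 := by push_cast; ring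
    have e2 : ((↑(d + 1) : ℝ) + 7) / 2 - 1/2 = ((d : ℝ) + 7) / 2 := by push_cast; ring
    rw [e1, e2, col2] at hp
    have := w_nonneg ((d + 1) % 6)
    have hd0 : (0 : ℝ) ≤ ((d : ℕ) : ℝ) + 1 := by positivity
    rw [hp]
    push_cast
    linarith

/-- column m = 3 beats 3x for d ≥ 3. -/
lemma col3_3x : ∀ d : ℕ, 3 ≤ d → 3 * (((d : ℝ) + 7) / 2) ≤ s d (((d : ℝ) + 7) / 2) := by
  intro d hd
  induction d, hd using Nat.le_induction with
  | base =>
    rw [show (((3 : ℕ) : ℝ) + 7) / 2 = 5 by norm_num, s_three]; norm_num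
  | succ d hd ih =>
    have hp := pascal_s d (((↑(d + 1) : ℝ) + 7) / 2)
    have e1 : ((↑(d + 1) : ℝ) + 7) / 2 - 1 = ((↑(d + 1) : ℝ) + 5) / 2 := by push_cast; ring
    have e2 : ((↑(d + 1) : ℝ) + 7) / 2 - 1/2 = ((d : ℝ) + 7) / 2 := by push_cast; ring
    rw [e1, e2, col2] at hp
    have := w_nonneg ((d + 1) % 6)
    have hd0 : (0 : ℝ) ≤ ((d : ℕ) : ℝ) := by positivity
    rw [hp]
    push_cast
    linarith

/-- rows d ≥ 2, columns m ≥ 3: value at least 3. -/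
lemma s_ge_three : ∀ d : ℕ, 2 ≤ d → ∀ m : ℕ, 3 ≤ m →
    (3 : ℝ) ≤ s d (((d : ℝ) + 1) / 2 + (m : ℝ)) := by
  intro d hd m hm
  induction m, hm using Nat.le_induction with
  | base =>
    have e : ((d : ℝ) + 1) / 2 + ((3 : ℕ) : ℝ) = ((d : ℝ) + 7) / 2 := by push_cast; ring
    rw [e]
    linarith [col3_ge d hd]
  | succ m hm ihm =>
    obtain ⟨e, rfl⟩ : ∃ e, d = e + 1 := ⟨d - 1, by omega⟩
    have hp := pascal_s e (((↑(e + 1) : ℝ) + 1) / 2 + (↑(m + 1) : ℝ))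
    have e1 : ((↑(e + 1) : ℝ) + 1) / 2 + (↑(m + 1) : ℝ) - 1
        = ((↑(e + 1) : ℝ) + 1) / 2 + (m : ℝ) := by push_cast; ring
    have e2 : ((↑(e + 1) : ℝ) + 1) / 2 + (↑(m + 1) : ℝ) - 1/2
        = ((e : ℝ) + 1) / 2 + (↑(m + 1) : ℝ) := by push_cast; ring
    rw [e1, e2] at hp
    have h2 := s_nonneg e (m + 1) (by omega)
    push_cast at hp h2 ihm ⊢
    linarith

/-- main bound: rows d ≥ 3, columns m ≥ 3. -/
lemma s_ge_3x : ∀ d : ℕ, 3 ≤ d → ∀ m : ℕ, 3 ≤ m →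
    3 * (((d : ℝ) + 1) / 2 + (m : ℝ)) ≤ s d (((d : ℝ) + 1) / 2 + (m : ℝ)) := by
  intro d hd m hm
  induction m, hm using Nat.le_induction with
  | base =>
    have e : ((d : ℝ) + 1) / 2 + ((3 : ℕ) : ℝ) = ((d : ℝ) + 7) / 2 := by push_cast; ring
    rw [e]
    exact col3_3x d hd
  | succ m hm ihm =>
    obtain ⟨e, rfl⟩ : ∃ e, d = e + 1 := ⟨d - 1, by omega⟩
    have hp := pascal_s e (((↑(e + 1) : ℝ) + 1) / 2 + (↑(m + 1) : ℝ))
    have e1 : ((↑(e + 1) : ℝ) + 1) / 2 + (↑(m + 1) : ℝ) - 1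
        = ((↑(e + 1) : ℝ) + 1) / 2 + (m : ℝ) := by push_cast; ring
    have e2 : ((↑(e + 1) : ℝ) + 1) / 2 + (↑(m + 1) : ℝ) - 1/2
        = ((e : ℝ) + 1) / 2 + (↑(m + 1) : ℝ) := by push_cast; ring
    rw [e1, e2] at hp
    have h2 := s_ge_three e (by omega) (m + 1) (by omega)
    push_cast at hp h2 ihm ⊢
    linarith


/-- For `d ≥ 3` and `x ∈ ℤ + (d+1)/2` with `x ≥ (d+7)/2`, one has `s_d(x) ≥ 3x`. -/
theorem sd_ge_three_x (d : ℕ) (hd : 3 ≤ d) (x : ℝ)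
    (hmem : ∃ m : ℤ, x = ((d : ℝ) + 1) / 2 + (m : ℝ))
    (hx : ((d : ℝ) + 7) / 2 ≤ x) : 3 * x ≤ s d x := by
  obtain ⟨m, rfl⟩ := hmem
  have hm3 : (3 : ℤ) ≤ m := by
    have : (3 : ℝ) ≤ (m : ℝ) := by linarith
    exact_mod_cast this
  obtain ⟨n, rfl⟩ : ∃ n : ℕ, m = (n : ℤ) := ⟨m.toNat, by omega⟩
  have hn : 3 ≤ n := by exact_mod_cast hm3
  have := s_ge_3x d hd n hn
  push_cast at this ⊢
  linarith
end

section
/- For every integer d ≥ 1, the polynomial function s_d is strictly increasing on the real interval [(d+3)/2, ∞); that is, for all real x, y with (d+3)/2 ≤ x < y, s_d(x) < s_d(y). -/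
/-- `Bi j y = binom(y+j, j)` as a polynomial in `y`. -/
noncomputable def Bi (j : ℕ) (y : ℝ) : ℝ :=
  (∏ l ∈ Finset.range j, (y + l + 1)) / (j.factorial : ℝ)

/-- Period-6 sign sequence 1,1,0,-1,-1,0. -/
noncomputable def nv (m : ℕ) : ℝ :=
  if m % 6 = 0 then 1 else if m % 6 = 1 then 1 else
  if m % 6 = 3 then -1 else if m % 6 = 4 then -1 else 0

/-- `R d x = Σ_{j≤d} nv (d-j) · Bi j (x - (d+3)/2)`; closed form for `s d`. -/
noncomputable def R (d : ℕ) (x : ℝ) : ℝ :=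
  ∑ j ∈ Finset.range (d+1), nv (d - j) * Bi j (x - ((d:ℝ)+3)/2)

lemma Bi_zero (y : ℝ) : Bi 0 y = 1 := by simp [Bi]

lemma fact_ne (j : ℕ) : ((j.factorial : ℝ)) ≠ 0 := by
  exact_mod_cast j.factorial_ne_zero

/-- Pascal (shift form): `Bi (j+1) (y+1) - Bi (j+1) y = Bi j (y+1)`. -/
lemma Bi_pascal (j : ℕ) (y : ℝ) : Bi (j+1) (y+1) = Bi j (y+1) + Bi (j+1) y := by
  have h1 : ∏ l ∈ Finset.range (j+1), (y + 1 + (l:ℝ) + 1)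
      = (∏ l ∈ Finset.range j, (y + 1 + (l:ℝ) + 1)) * (y + 1 + (j:ℝ) + 1) := by
    rw [Finset.prod_range_succ]
  have h2 : ∏ l ∈ Finset.range (j+1), (y + (l:ℝ) + 1)
      = (∏ l ∈ Finset.range j, (y + 1 + (l:ℝ) + 1)) * (y + 1) := by
    rw [Finset.prod_range_succ']
    congr 1
    · apply Finset.prod_congr rfl
      intro l _
      push_cast
      ring
    · norm_num
  have hf : ((j+1).factorial : ℝ) = (j+1) * (j.factorial : ℝ) := by
    rw [Nat.factorial_succ]; push_cast; ring
  unfold Bi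
  rw [h1, h2, hf]
  have hj := fact_ne j
  field_simp
  ring

/-- `Bi (j+1) t - Bi j t = t * (∏_{l<j}(t+l+1)) / (j+1)!`. -/
lemma Bi_step (j : ℕ) (t : ℝ) :
    Bi (j+1) t - Bi j t = t * (∏ l ∈ Finset.range j, (t + l + 1)) / ((j+1).factorial : ℝ) := by
  have h1 : ∏ l ∈ Finset.range (j+1), (t + (l:ℝ) + 1)
      = (∏ l ∈ Finset.range j, (t + (l:ℝ) + 1)) * (t + (j:ℝ) + 1) := Finset.prod_range_succ _ _
  have hf : ((j+1).factorial : ℝ) = (j+1) * (j.factorial : ℝ) := by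
    rw [Nat.factorial_succ]; push_cast; ring
  unfold Bi
  rw [h1, hf]
  have hj := fact_ne j
  have hj1 : ((j:ℝ)+1) ≠ 0 := by positivity
  field_simp
  ring

/-- Hockey stick: `∑_{i≤n} Bi i y = Bi n (y+1)`. -/
lemma Bi_hockey (n : ℕ) (y : ℝ) :
    ∑ i ∈ Finset.range (n+1), Bi i y = Bi n (y+1) := by
  induction n with
  | zero => simp [Bi]
  | succ n ih =>
      rw [Finset.sum_range_succ, ih, Bi_pascal]

lemma nv_add_six (m : ℕ) : nv (m + 6) = nv m := by
  unfold nv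
  have : (m + 6) % 6 = m % 6 := by omega
  rw [this]

lemma nv_six_sum (n : ℕ) : ∑ i ∈ Finset.range 6, nv (n + i) = 0 := by
  induction n with
  | zero => simp [Finset.sum_range_succ, nv]
  | succ n ih =>
      have hA : ∑ i ∈ Finset.range 7, nv (n + i)
          = (∑ i ∈ Finset.range 6, nv (n + i)) + nv (n + 6) := Finset.sum_range_succ _ _
      have hB : ∑ i ∈ Finset.range 7, nv (n + i)
          = (∑ i ∈ Finset.range 6, nv (n + (i + 1))) + nv (n + 0) := Finset.sum_range_succ' _ _
      have hC : ∑ i ∈ Finset.range 6, nv (n + (i + 1)) = ∑ i ∈ Finset.range 6, nv (n + 1 + i) :=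
        Finset.sum_congr rfl (fun i _ => by congr 1; omega)
      have hD : nv (n + 0) = nv n := by congr 1
      have hE := nv_add_six n
      show ∑ i ∈ Finset.range 6, nv (n + 1 + i) = 0
      linarith [hA, hB, hC, ih]

/-- Partial sums of `nv`. -/
noncomputable def sg (n : ℕ) : ℝ := ∑ i ∈ Finset.range (n+1), nv i

lemma sg_add_six (n : ℕ) : sg (n + 6) = sg n := by
  unfold sg
  have : n + 6 + 1 = (n+1) + 6 := by omega
  rw [this, Finset.sum_range_add]
  have : ∑ i ∈ Finset.range 6, nv (n + 1 + i) = 0 := nv_six_sum (n+1)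
  rw [this, add_zero]

/-- Key arithmetic: `nv m + sg (m-2) = 1` for `m ≥ 2`. -/
lemma nv_sg (m : ℕ) (hm : 2 ≤ m) : nv m + sg (m - 2) = 1 := by
  induction m using Nat.strong_induction_on with
  | _ m ih =>
    by_cases h8 : m ≤ 7
    · interval_cases m <;> norm_num [nv, sg, Finset.sum_range_succ]
    · have hm6 : 2 ≤ m - 6 := by omega
      have h1 : m = (m - 6) + 6 := by omega
      have key := ih (m - 6) (by omega) hm6
      rw [h1, nv_add_six]
      have h2 : (m - 6) + 6 - 2 = ((m - 6) - 2) + 6 := by omega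
      rw [h2, sg_add_six]
      exact key

/-- odd product form -/
lemma podd (j : ℕ) (x : ℝ) :
    x * ∏ i ∈ Finset.Icc 1 j, (x ^ 2 - (i : ℝ) ^ 2)
      = ∏ l ∈ Finset.range (2*j+1), (x - (j:ℝ) + (l:ℝ)) := by
  induction j with
  | zero => simp
  | succ j ih =>
      have key : ∏ l ∈ Finset.range (2*j+1+2), (x - ((j:ℝ)+1) + (l:ℝ))
          = (x * ∏ i ∈ Finset.Icc 1 j, (x ^ 2 - (i:ℝ) ^ 2)) * (x ^ 2 - ((j:ℝ)+1)^2) := by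
        have h1 : 2*j+1+2 = (2*j+2)+1 := by omega
        rw [h1, Finset.prod_range_succ']
        have h2 : ∀ l ∈ Finset.range (2*j+2),
            (x - ((j:ℝ)+1) + (((l+1:ℕ)):ℝ)) = x - (j:ℝ) + (l:ℝ) := by
          intro l _; push_cast; ring
        rw [Finset.prod_congr rfl h2, Finset.prod_range_succ, ← ih]
        push_cast
        ring
      rw [Finset.prod_Icc_succ_top (by omega : 1 ≤ j+1)]
      have h3 : 2*(j+1)+1 = 2*j+1+2 := by omega
      rw [h3]
      have h4 : ∀ l ∈ Finset.range (2*j+1+2),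
          (x - (((j+1:ℕ)):ℝ) + (l:ℝ)) = x - ((j:ℝ)+1) + (l:ℝ) := by
        intro l _; push_cast; ring
      rw [Finset.prod_congr rfl h4, key]
      push_cast
      ring

/-- even product form -/
lemma peven (j : ℕ) (x : ℝ) :
    (∏ i ∈ Finset.Icc 1 j, (x ^ 2 - ((2 * (i : ℝ) - 1) / 2) ^ 2))
      = ∏ l ∈ Finset.range (2*j), (x - (2*(j:ℝ) - 1)/2 + (l:ℝ)) := by
  induction j with
  | zero => simp
  | succ j ih =>
      have key : ∏ l ∈ Finset.range (2*j+2), (x - (2*((j:ℝ)+1) - 1)/2 + (l:ℝ))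
          = (∏ i ∈ Finset.Icc 1 j, (x ^ 2 - ((2 * (i : ℝ) - 1) / 2) ^ 2)) *
            (x ^ 2 - ((2*((j:ℝ)+1) - 1)/2) ^ 2) := by
        have h1 : 2*j+2 = (2*j+1)+1 := by omega
        rw [h1, Finset.prod_range_succ']
        have h2 : ∀ l ∈ Finset.range (2*j+1),
            (x - (2*((j:ℝ)+1) - 1)/2 + (((l+1:ℕ)):ℝ)) = x - (2*(j:ℝ) - 1)/2 + (l:ℝ) := by
          intro l _; push_cast; ring
        rw [Finset.prod_congr rfl h2, Finset.prod_range_succ, ih]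
        push_cast
        ring
      rw [Finset.prod_Icc_succ_top (by omega : 1 ≤ j+1)]
      have h3 : 2*(j+1) = 2*j+2 := by omega
      rw [h3]
      have h4 : ∀ l ∈ Finset.range (2*j+2),
          (x - (2*(((j+1:ℕ)):ℝ) - 1)/2 + (l:ℝ)) = x - (2*((j:ℝ)+1) - 1)/2 + (l:ℝ) := by
        intro l _; push_cast; ring
      rw [Finset.prod_congr rfl h4, key]
      push_cast
      ring

lemma c_eq (d : ℕ) (x : ℝ) : c d x = Bi d (x - ((d:ℝ)+1)/2) := by
  rcases Nat.even_or_odd d with he | ho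
  · obtain ⟨j, hj⟩ := he
    subst hj
    unfold c Bi
    have hmod : (j + j) % 2 = 0 := by omega
    have hdiv : (j + j) / 2 = j := by omega
    rw [if_pos hmod, hdiv, peven j x]
    have h2 : j + j = 2 * j := by omega
    rw [h2]
    have h4 : ∀ l ∈ Finset.range (2*j),
        (x - (((2*j : ℕ) : ℝ) + 1)/2 + (l:ℝ) + 1) = x - (2*(j:ℝ) - 1)/2 + (l:ℝ) := by
      intro l _; push_cast; ring
    rw [← Finset.prod_congr rfl h4]
    ring
  · obtain ⟨j, hj⟩ := ho
    subst hj
    unfold c Bi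
    have hmod : ¬ ((2*j + 1) % 2 = 0) := by omega
    have hdiv : (2*j + 1) / 2 = j := by omega
    rw [if_neg hmod, hdiv]
    have key := podd j x
    have h4 : ∀ l ∈ Finset.range (2*j+1),
        (x - (((2*j+1 : ℕ) : ℝ) + 1)/2 + (l:ℝ) + 1) = x - (j:ℝ) + (l:ℝ) := by
      intro l _; push_cast; ring
    rw [← Finset.prod_congr rfl h4] at key
    rw [mul_assoc, key]
    ring

lemma s_rec (d : ℕ) (hd : 2 ≤ d) (x : ℝ) : s d x = c d x - s (d-2) x := by
  unfold s
  have h1 : (d-2)/2 = d/2 - 1 := by omega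
  have h2 : (d-2) % 2 = d % 2 := by omega
  have h3 : d/2 - 1 + 1 = d/2 := by omega
  rw [h1, h2, h3]
  rw [Finset.sum_range_succ]
  have h4 : (-1:ℝ) ^ (d/2 - d/2) = 1 := by
    have : d/2 - d/2 = 0 := by omega
    rw [this, pow_zero]
  have h5 : 2 * (d/2) + d % 2 = d := by omega
  rw [h4, h5, one_mul]
  have h6 : ∀ j ∈ Finset.range (d/2),
      (-1:ℝ) ^ (d/2 - j) * c (2*j + d % 2) x
        = -((-1:ℝ) ^ (d/2 - 1 - j) * c (2*j + d % 2) x) := by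
    intro j hj
    have hj' : j < d/2 := Finset.mem_range.mp hj
    have : d/2 - j = (d/2 - 1 - j) + 1 := by omega
    rw [this, pow_succ]
    ring
  rw [Finset.sum_congr rfl h6, Finset.sum_neg_distrib]
  ring

lemma Tlem (z : ℝ) : ∀ n : ℕ, ∑ m ∈ Finset.range (n+1), nv m * Bi (n - m) (z+1)
    = ∑ m ∈ Finset.range (n+1), sg m * Bi (n - m) z := by
  intro n
  induction n with
  | zero => simp [sg, Bi_zero]
  | succ n ih =>
      have hL : ∑ m ∈ Finset.range (n+2), nv m * Bi (n+1 - m) (z+1)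
          = (∑ m ∈ Finset.range (n+1), nv m * Bi (n - m) (z+1))
            + ∑ m ∈ Finset.range (n+2), nv m * Bi (n+1 - m) z := by
        rw [Finset.sum_range_succ (fun m => nv m * Bi (n+1-m) (z+1)),
            Finset.sum_range_succ (fun m => nv m * Bi (n+1-m) z)]
        have hmid : ∀ m ∈ Finset.range (n+1),
            nv m * Bi (n+1-m) (z+1)
              = nv m * Bi (n-m) (z+1) + nv m * Bi (n+1-m) z := by
          intro m hm
          have hm' : m ≤ n := by
            have := Finset.mem_range.mp hm; omega
          have h1 : n + 1 - m = (n - m) + 1 := by omega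
          rw [h1, Bi_pascal]
          ring
        rw [Finset.sum_congr rfl hmid, Finset.sum_add_distrib]
        have hz : Bi (n+1-(n+1)) (z+1) = Bi (n+1-(n+1)) z := by
          have : n+1-(n+1) = 0 := by omega
          rw [this, Bi_zero, Bi_zero]
        rw [hz]
        ring
      have hR : ∑ m ∈ Finset.range (n+2), sg m * Bi (n+1 - m) z
          = (∑ m ∈ Finset.range (n+1), sg m * Bi (n - m) z)
            + ∑ m ∈ Finset.range (n+2), nv m * Bi (n+1 - m) z := by
        have hsg : ∀ m ∈ Finset.range (n+2),
            sg m * Bi (n+1-m) z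
              = nv m * Bi (n+1-m) z + (∑ i ∈ Finset.range m, nv i) * Bi (n+1-m) z := by
          intro m _
          have : sg m = (∑ i ∈ Finset.range m, nv i) + nv m := by
            unfold sg; rw [Finset.sum_range_succ]
          rw [this]; ring
        rw [Finset.sum_congr rfl hsg, Finset.sum_add_distrib]
        have hshift : ∑ m ∈ Finset.range (n+2), (∑ i ∈ Finset.range m, nv i) * Bi (n+1-m) z
            = ∑ m ∈ Finset.range (n+1), sg m * Bi (n - m) z := by
          rw [Finset.sum_range_succ' (fun m => (∑ i ∈ Finset.range m, nv i) * Bi (n+1-m) z)]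
          simp only [Finset.range_zero, Finset.sum_empty, zero_mul, add_zero]
          apply Finset.sum_congr rfl
          intro m _
          have h1 : n + 1 - (m+1) = n - m := by omega
          rw [h1]
          rfl
        rw [hshift]
        ring
      rw [hL, hR, ih]

lemma R_rec (d : ℕ) (hd : 2 ≤ d) (x : ℝ) : R d x + R (d-2) x = c d x := by
  set y : ℝ := x - ((d:ℝ)+3)/2 with hy
  have hR2 : R (d-2) x = ∑ j ∈ Finset.range (d-1), nv (d-2-j) * Bi j (y+1) := by
    unfold R
    have h1 : d - 2 + 1 = d - 1 := by omega
    rw [h1]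
    apply Finset.sum_congr rfl
    intro j _
    have hcast : ((d-2:ℕ):ℝ) = (d:ℝ) - 2 := by
      have : (2:ℕ) ≤ d := hd
      push_cast [Nat.cast_sub this]
      ring
    rw [hcast]
    have : x - ((d:ℝ) - 2 + 3)/2 = y + 1 := by rw [hy]; ring
    rw [this]
  -- reflect, apply Tlem, reflect back
  have hrefl1 : ∑ j ∈ Finset.range (d-1), nv (d-2-j) * Bi j (y+1)
      = ∑ m ∈ Finset.range (d-1), nv m * Bi (d-2-m) (y+1) := by
    rw [← Finset.sum_range_reflect (fun m => nv m * Bi (d-2-m) (y+1)) (d-1)]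
    apply Finset.sum_congr rfl
    intro j hj
    have hj' : j < d - 1 := Finset.mem_range.mp hj
    have e1 : d - 1 - 1 - j = d - 2 - j := by omega
    have e2 : d - 2 - (d - 2 - j) = j := by omega
    rw [e1, e2]
  have hrefl2 : ∑ m ∈ Finset.range (d-1), sg m * Bi (d-2-m) y
      = ∑ j ∈ Finset.range (d-1), sg (d-2-j) * Bi j y := by
    rw [← Finset.sum_range_reflect (fun j => sg (d-2-j) * Bi j y) (d-1)]
    apply Finset.sum_congr rfl
    intro m hm
    have hm' : m < d - 1 := Finset.mem_range.mp hm
    have e1 : d - 1 - 1 - m = d - 2 - m := by omega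
    have e2 : d - 2 - (d - 2 - m) = m := by omega
    rw [e1, e2]
  have hT : ∑ m ∈ Finset.range (d-1), nv m * Bi (d-2-m) (y+1)
      = ∑ m ∈ Finset.range (d-1), sg m * Bi (d-2-m) y := by
    have h1 : d - 1 = (d-2) + 1 := by omega
    rw [h1]
    exact Tlem y (d-2)
  have hR2' : R (d-2) x = ∑ j ∈ Finset.range (d-1), sg (d-2-j) * Bi j y := by
    rw [hR2, hrefl1, hT, hrefl2]
  -- split R d
  have hRd : R d x = (∑ j ∈ Finset.range (d-1), nv (d-j) * Bi j y)
      + Bi (d-1) y + Bi d y := by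
    unfold R
    rw [← hy]
    have h1 : d + 1 = (d - 1) + 1 + 1 := by omega
    rw [h1, Finset.sum_range_succ, Finset.sum_range_succ]
    have e1 : d - 1 + 1 = d := by omega
    have e2 : d - (d - 1) = 1 := by omega
    have e3 : d - d = 0 := by omega
    rw [e1, e2, e3]
    have hnv1 : nv 1 = 1 := by norm_num [nv]
    have hnv0 : nv 0 = 1 := by norm_num [nv]
    rw [hnv1, hnv0]
    ring
  rw [hRd, hR2']
  have hmerge : (∑ j ∈ Finset.range (d-1), nv (d-j) * Bi j y)
      + (∑ j ∈ Finset.range (d-1), sg (d-2-j) * Bi j y)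
      = ∑ j ∈ Finset.range (d-1), Bi j y := by
    rw [← Finset.sum_add_distrib]
    apply Finset.sum_congr rfl
    intro j hj
    have hj' : j < d - 1 := Finset.mem_range.mp hj
    have hm2 : 2 ≤ d - j := by omega
    have e1 : d - j - 2 = d - 2 - j := by omega
    have := nv_sg (d - j) hm2
    rw [e1] at this
    linear_combination (Bi j y) * this
  have hfinal : (∑ j ∈ Finset.range (d-1), Bi j y) + Bi (d-1) y + Bi d y
      = Bi d (y+1) := by
    rw [← Bi_hockey d y]
    have h1 : d + 1 = (d - 1) + 1 + 1 := by omega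
    rw [h1, Finset.sum_range_succ, Finset.sum_range_succ]
    have e1 : d - 1 + 1 = d := by omega
    rw [e1]
  have hc : c d x = Bi d (y+1) := by
    rw [c_eq d x]
    have : x - ((d:ℝ)+1)/2 = y + 1 := by rw [hy]; ring
    rw [this]
  rw [hc, ← hfinal]
  linarith [hmerge]

lemma s_eq_R : ∀ d : ℕ, 1 ≤ d → ∀ x : ℝ, s d x = R d x := by
  intro d
  induction d using Nat.strong_induction_on with
  | _ d ih =>
    intro hd x
    match d, hd with
    | 1, _ =>
        have hs : s 1 x = x := by
          unfold s c
          norm_num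
        have hr : R 1 x = x := by
          unfold R
          rw [Finset.sum_range_succ, Finset.sum_range_succ]
          norm_num [nv, Bi]
          ring
        rw [hs, hr]
    | 2, _ =>
        have hs : s 2 x = x^2/2 - 9/8 := by
          unfold s c
          rw [Finset.sum_range_succ, Finset.sum_range_succ]
          norm_num [Finset.Icc_self, Nat.factorial]
          ring
        have hr : R 2 x = x^2/2 - 9/8 := by
          unfold R
          rw [Finset.sum_range_succ, Finset.sum_range_succ, Finset.sum_range_succ]
          norm_num [nv, Bi, Finset.prod_range_succ, Nat.factorial]
          ring
        rw [hs, hr]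
    | (n+3), _ =>
        have h2 : 2 ≤ n + 3 := by omega
        rw [s_rec (n+3) h2 x]
        have hsub : n + 3 - 2 = n + 1 := by omega
        rw [hsub]
        have := ih (n+1) (by omega) (by omega) x
        rw [this]
        have hrr := R_rec (n+3) h2 x
        rw [hsub] at hrr
        linarith

lemma Wlem (F : ℕ → ℝ) (hmono : Monotone F) (h0 : 0 ≤ F 0) :
    ∀ d : ℕ, 1 ≤ d → F d - F (d-1) ≤ ∑ m ∈ Finset.range (d+1), nv m * F (d - m) := by
  intro d
  induction d using Nat.strong_induction_on with
  | _ d ih =>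
    intro hd
    have h01 : F 0 ≤ F 1 := hmono (by omega)
    by_cases h7 : d ≤ 6
    · interval_cases d <;>
        · simp only [Finset.sum_range_succ, Finset.sum_range_zero]
          norm_num [nv]
          linarith [hmono (show (0:ℕ) ≤ 1 by omega), hmono (show (0:ℕ) ≤ 2 by omega),
            hmono (show (1:ℕ) ≤ 2 by omega), hmono (show (1:ℕ) ≤ 3 by omega),
            hmono (show (2:ℕ) ≤ 3 by omega), hmono (show (2:ℕ) ≤ 5 by omega),
            hmono (show (3:ℕ) ≤ 5 by omega), hmono (show (0:ℕ) ≤ 3 by omega),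
            hmono (show (1:ℕ) ≤ 4 by omega), hmono (show (2:ℕ) ≤ 4 by omega),
            hmono (show (3:ℕ) ≤ 4 by omega)]
    · obtain ⟨e, rfl⟩ : ∃ e, d = e + 6 := ⟨d - 6, by omega⟩
      have he : 1 ≤ e := by omega
      have hsplit : ∑ m ∈ Finset.range (e+6+1), nv m * F (e+6-m)
          = (∑ m ∈ Finset.range 6, nv m * F (e+6-m))
            + ∑ m ∈ Finset.range (e+1), nv (6+m) * F (e+6-(6+m)) := by
        have h1 : e+6+1 = 6 + (e+1) := by omega
        rw [h1, Finset.sum_range_add]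
      have htail : ∑ m ∈ Finset.range (e+1), nv (6+m) * F (e+6-(6+m))
          = ∑ m ∈ Finset.range (e+1), nv m * F (e-m) := by
        apply Finset.sum_congr rfl
        intro m _
        have e1 : 6 + m = m + 6 := by omega
        have e2 : e + 6 - (m + 6) = e - m := by omega
        rw [e1, nv_add_six, e2]
      have hhead : ∑ m ∈ Finset.range 6, nv m * F (e+6-m)
          = F (e+6) + F (e+5) - F (e+3) - F (e+2) := by
        simp only [Finset.sum_range_succ, Finset.sum_range_zero]
        norm_num [nv]
        have e1 : e + 6 - 1 = e + 5 := by omega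
        have e2 : e + 6 - 2 = e + 4 := by omega
        have e3 : e + 6 - 3 = e + 3 := by omega
        have e4 : e + 6 - 4 = e + 2 := by omega
        have e5 : e + 6 - 5 = e + 1 := by omega
        simp only [e1, e2, e3, e4, e5]
        ring
      have hIH := ih e (by omega) he
      have hm1 : F (e+2) ≤ F (e+5) := hmono (by omega)
      have hm2 : F (e+3) ≤ F (e+5) := hmono (by omega)
      have hm3 : F (e-1) ≤ F e := hmono (by omega)
      have goal1 : e + 6 - 1 = e + 5 := by omega
      rw [hsplit, htail, hhead, goal1]
      linarith

/-- key product comparison -/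
lemma prod_cmp (j : ℕ) {a b : ℝ} (ha : 0 ≤ a) (hab : a < b) :
    a * (∏ l ∈ Finset.range j, (a + l + 1)) < b * (∏ l ∈ Finset.range j, (b + l + 1)) := by
  have hb : 0 < b := lt_of_le_of_lt ha hab
  have hpb : 0 < ∏ l ∈ Finset.range j, (b + (l:ℝ) + 1) := by
    apply Finset.prod_pos
    intro l _
    have : (0:ℝ) ≤ l := Nat.cast_nonneg l
    linarith
  have hple : (∏ l ∈ Finset.range j, (a + (l:ℝ) + 1)) ≤ ∏ l ∈ Finset.range j, (b + (l:ℝ) + 1) := by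
    apply Finset.prod_le_prod
    · intro l _
      have : (0:ℝ) ≤ l := Nat.cast_nonneg l
      linarith
    · intro l _
      linarith
  calc a * (∏ l ∈ Finset.range j, (a + (l:ℝ) + 1))
      ≤ a * (∏ l ∈ Finset.range j, (b + (l:ℝ) + 1)) := by
        apply mul_le_mul_of_nonneg_left hple ha
    _ < b * (∏ l ∈ Finset.range j, (b + (l:ℝ) + 1)) := by
        exact mul_lt_mul_of_pos_right hab hpb

/-- `s_d` is strictly increasing on `[(d+3)/2, ∞)` for every `d ≥ 1`. -/
theorem sd_strictMono_on_tail (d : ℕ) (hd : 1 ≤ d) (x y : ℝ)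
    (hx : ((d : ℝ) + 3) / 2 ≤ x) (hxy : x < y) :
    s d x < s d y := by
  set T : ℝ := ((d:ℝ)+3)/2 with hT
  set a : ℝ := x - T with hadef
  set b : ℝ := y - T with hbdef
  have ha : 0 ≤ a := by simp [hadef]; linarith
  have hab : a < b := by simp [hadef, hbdef]; linarith
  set F : ℕ → ℝ := fun j => Bi j b - Bi j a with hF
  have hFmono : Monotone F := by
    apply monotone_nat_of_le_succ
    intro j
    have h1 := Bi_step j b
    have h2 := Bi_step j a
    have hcmp := le_of_lt (prod_cmp j ha hab)
    have hfp : (0:ℝ) < ((j+1).factorial : ℝ) := by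
      exact_mod_cast Nat.factorial_pos (j+1)
    have : F (j+1) - F j
        = (b * (∏ l ∈ Finset.range j, (b + l + 1))
           - a * (∏ l ∈ Finset.range j, (a + l + 1))) / ((j+1).factorial : ℝ) := by
      simp only [hF]
      field_simp at h1 h2 ⊢
      linarith [h1, h2]
    have hge : 0 ≤ F (j+1) - F j := by
      rw [this]
      apply div_nonneg _ (le_of_lt hfp)
      linarith
    linarith
  have hF0 : F 0 = 0 := by simp [hF, Bi]
  have hstrict : 0 < F d - F (d-1) := by
    have hd1 : d - 1 + 1 = d := by omega
    have h1 := Bi_step (d-1) b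
    have h2 := Bi_step (d-1) a
    rw [hd1] at h1 h2
    have hcmp := prod_cmp (d-1) ha hab
    have hfp : (0:ℝ) < ((d-1+1).factorial : ℝ) := by
      exact_mod_cast Nat.factorial_pos (d-1+1)
    rw [hd1] at hfp
    have : F d - F (d-1)
        = (b * (∏ l ∈ Finset.range (d-1), (b + l + 1))
           - a * (∏ l ∈ Finset.range (d-1), (a + l + 1))) / ((d).factorial : ℝ) := by
      simp only [hF]
      rw [sub_div]
      linarith [h1, h2]
    rw [this]
    apply div_pos _ hfp
    linarith
  -- express s d y - s d x
  have hsum : s d y - s d x = ∑ m ∈ Finset.range (d+1), nv m * F (d - m) := by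
    rw [s_eq_R d hd y, s_eq_R d hd x]
    unfold R
    rw [← Finset.sum_sub_distrib]
    have hstep : ∑ j ∈ Finset.range (d+1),
        (nv (d-j) * Bi j (y - ((d:ℝ)+3)/2) - nv (d-j) * Bi j (x - ((d:ℝ)+3)/2))
        = ∑ j ∈ Finset.range (d+1), nv (d-j) * F j := by
      apply Finset.sum_congr rfl
      intro j _
      simp only [hF, ← hT, ← hadef, ← hbdef]
      ring
    rw [hstep]
    rw [← Finset.sum_range_reflect (fun m => nv m * F (d - m)) (d+1)]
    apply Finset.sum_congr rfl
    intro j hj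
    have hj' : j < d + 1 := Finset.mem_range.mp hj
    have e1 : d + 1 - 1 - j = d - j := by omega
    have e2 : d - (d - j) = j := by omega
    rw [e1, e2]
  have hW := Wlem F hFmono (le_of_eq hF0.symm) d hd
  linarith [hsum, hW, hstrict]
end

section
/- Let d ≥ 2 be an integer and p a prime. If x ∈ ℚ satisfies |x|_p > 1 for the p-adic absolute value, then |r_d(x)|_p > |x|_p. -/
/-- The polynomial `c_d` over `ℚ`. -/
def cQ (d : ℕ) (x : ℚ) : ℚ :=
  if d % 2 = 0 then
    (1 / (d.factorial : ℚ)) * ∏ i ∈ Finset.Icc 1 (d / 2), (x ^ 2 - ((2 * (i : ℚ) - 1) / 2) ^ 2)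
  else
    (1 / (d.factorial : ℚ)) * x * ∏ i ∈ Finset.Icc 1 (d / 2), (x ^ 2 - (i : ℚ) ^ 2)

/-- The polynomial `s_d` over `ℚ`. -/
def sQ (d : ℕ) (x : ℚ) : ℚ :=
  ∑ j ∈ Finset.range (d / 2 + 1), (-1 : ℚ) ^ (d / 2 - j) * cQ (2 * j + d % 2) x

/-- The polynomial `r_d` of Doyle–Hyde, over `ℚ`. -/
def rQ (d : ℕ) (x : ℚ) : ℚ :=
  if d % 2 = 0 then sQ d (x - 3 - ((d : ℚ) + 1) / 2) + 2
  else sQ d (x - 3 - ((d : ℚ) + 1) / 2) - x + (d : ℚ) + 6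

open Finset

section Aux

variable {p : ℕ} [hp : Fact p.Prime]

lemma padicNorm_add_left {a b : ℚ} (h : padicNorm p b < padicNorm p a) :
    padicNorm p (a + b) = padicNorm p a := by
  rw [padicNorm.add_eq_max_of_ne h.ne', max_eq_left h.le]

lemma padicNorm_prod {α : Type*} (s : Finset α) (f : α → ℚ) :
    padicNorm p (∏ i ∈ s, f i) = ∏ i ∈ s, padicNorm p (f i) := by
  induction s using Finset.cons_induction with
  | empty => simp [padicNorm.one]
  | cons a s ha ih => simp [Finset.prod_cons, padicNorm.mul, ih]

lemma padicNorm_pow (a : ℚ) (n : ℕ) : padicNorm p (a ^ n) = padicNorm p a ^ n := by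
  induction n with
  | zero => simp [padicNorm.one]
  | succ n ih => rw [pow_succ, pow_succ, padicNorm.mul, ih]

lemma padicNorm_neg_one_pow (m : ℕ) : padicNorm p ((-1 : ℚ) ^ m) = 1 := by
  rw [padicNorm_pow, padicNorm.neg, padicNorm.one, one_pow]

lemma padicNorm_sum_dominant {f : ℕ → ℚ} {k : ℕ}
    (h : ∀ j < k, padicNorm p (f j) < padicNorm p (f k)) :
    padicNorm p (∑ j ∈ Finset.range (k+1), f j) = padicNorm p (f k) := by
  rw [Finset.sum_range_succ]
  rcases Nat.eq_zero_or_pos k with rfl | hk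
  · simp
  · have hlt : padicNorm p (∑ j ∈ Finset.range k, f j) < padicNorm p (f k) :=
      padicNorm.sum_lt ⟨0, Finset.mem_range.mpr hk⟩ (fun i hi => h i (Finset.mem_range.mp hi))
    rw [add_comm]
    exact padicNorm_add_left hlt

lemma padicNorm_fact_pos (n : ℕ) : 0 < padicNorm p (n.factorial : ℚ) := by
  have : (n.factorial : ℚ) ≠ 0 := Nat.cast_ne_zero.mpr n.factorial_ne_zero
  exact lt_of_le_of_ne (padicNorm.nonneg _) (Ne.symm (padicNorm.nonzero this))

lemma one_le_inv_fact (n : ℕ) : 1 ≤ padicNorm p (1 / (n.factorial : ℚ)) := by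
  rw [padicNorm.div, padicNorm.one]
  rw [le_div_iff₀ (padicNorm_fact_pos n), one_mul]
  exact padicNorm.of_nat _

lemma inv_fact_pos (n : ℕ) : 0 < padicNorm p (1 / (n.factorial : ℚ)) :=
  lt_of_lt_of_le one_pos (one_le_inv_fact n)

lemma inv_fact_mono {m n : ℕ} (h : m ≤ n) :
    padicNorm p (1 / (m.factorial : ℚ)) ≤ padicNorm p (1 / (n.factorial : ℚ)) := by
  rw [padicNorm.div, padicNorm.div, padicNorm.one]
  apply one_div_le_one_div_of_le (padicNorm_fact_pos n)
  obtain ⟨c, hc⟩ := Nat.factorial_dvd_factorial h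
  calc padicNorm p (n.factorial : ℚ) = padicNorm p (m.factorial : ℚ) * padicNorm p (c : ℚ) := by
        rw [← padicNorm.mul, ← Nat.cast_mul, ← hc]
    _ ≤ padicNorm p (m.factorial : ℚ) * 1 :=
        mul_le_mul_of_nonneg_left (padicNorm.of_nat _) (padicNorm.nonneg _)
    _ = _ := mul_one _

lemma cQ_even_norm {y M : ℚ} (j : ℕ)
    (hfac : ∀ i : ℕ, 1 ≤ i → i ≤ j → padicNorm p (y ^ 2 - ((2 * (i:ℚ) - 1) / 2) ^ 2) = M) :
    padicNorm p (cQ (2 * j) y) = padicNorm p (1 / ((2 * j).factorial : ℚ)) * M ^ j := by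
  have h0 : (2 * j) % 2 = 0 := by omega
  have h1 : (2 * j) / 2 = j := by omega
  rw [cQ, if_pos h0, h1, padicNorm.mul]
  congr 1
  rw [padicNorm_prod,
    Finset.prod_congr rfl (fun i hi => hfac i (mem_Icc.mp hi).1 (mem_Icc.mp hi).2),
    prod_const, Nat.card_Icc, Nat.add_sub_cancel]

lemma cQ_odd_norm {y M : ℚ} (j : ℕ)
    (hfac : ∀ i : ℕ, 1 ≤ i → i ≤ j → padicNorm p (y ^ 2 - (i:ℚ) ^ 2) = M) :
    padicNorm p (cQ (2 * j + 1) y)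
      = padicNorm p (1 / ((2 * j + 1).factorial : ℚ)) * padicNorm p y * M ^ j := by
  have h0 : ¬ (2 * j + 1) % 2 = 0 := by omega
  have h1 : (2 * j + 1) / 2 = j := by omega
  rw [cQ, if_neg h0, h1, padicNorm.mul, padicNorm.mul]
  congr 1
  rw [padicNorm_prod,
    Finset.prod_congr rfl (fun i hi => hfac i (mem_Icc.mp hi).1 (mem_Icc.mp hi).2),
    prod_const, Nat.card_Icc, Nat.add_sub_cancel]

lemma sQ_even_norm {y M : ℚ} (k : ℕ) (hM : 1 < M)
    (hfac : ∀ i : ℕ, 1 ≤ i → i ≤ k → padicNorm p (y ^ 2 - ((2 * (i:ℚ) - 1) / 2) ^ 2) = M) :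
    padicNorm p (sQ (2 * k) y) = padicNorm p (1 / ((2 * k).factorial : ℚ)) * M ^ k := by
  have h0 : (2 * k) % 2 = 0 := by omega
  have h1 : (2 * k) / 2 = k := by omega
  have hterm : ∀ j : ℕ, j ≤ k →
      padicNorm p ((-1 : ℚ) ^ (k - j) * cQ (2 * j + 0) y)
        = padicNorm p (1 / ((2 * j).factorial : ℚ)) * M ^ j := by
    intro j hj
    rw [Nat.add_zero, padicNorm.mul, padicNorm_neg_one_pow, one_mul]
    exact cQ_even_norm j (fun i h1 h2 => hfac i h1 (h2.trans hj))
  rw [sQ, h0, h1]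
  rw [padicNorm_sum_dominant (f := fun j => (-1 : ℚ) ^ (k - j) * cQ (2 * j + 0) y) ?_]
  · exact hterm k le_rfl
  · intro j hj
    rw [hterm j hj.le, hterm k le_rfl]
    calc padicNorm p (1 / ((2*j).factorial : ℚ)) * M ^ j
        ≤ padicNorm p (1 / ((2*k).factorial : ℚ)) * M ^ j :=
          mul_le_mul_of_nonneg_right (inv_fact_mono (by omega)) (by positivity)
      _ < padicNorm p (1 / ((2*k).factorial : ℚ)) * M ^ k :=
          (mul_lt_mul_iff_right₀ (inv_fact_pos _)).mpr (pow_lt_pow_right₀ hM hj)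

lemma sQ_odd_norm {y M : ℚ} (k : ℕ) (hM : 1 < M) (hy : 0 < padicNorm p y)
    (hfac : ∀ i : ℕ, 1 ≤ i → i ≤ k → padicNorm p (y ^ 2 - (i:ℚ) ^ 2) = M) :
    padicNorm p (sQ (2 * k + 1) y)
      = padicNorm p (1 / ((2 * k + 1).factorial : ℚ)) * padicNorm p y * M ^ k := by
  have h0 : (2 * k + 1) % 2 = 1 := by omega
  have h1 : (2 * k + 1) / 2 = k := by omega
  have hterm : ∀ j : ℕ, j ≤ k →
      padicNorm p ((-1 : ℚ) ^ (k - j) * cQ (2 * j + 1) y)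
        = padicNorm p (1 / ((2 * j + 1).factorial : ℚ)) * padicNorm p y * M ^ j := by
    intro j hj
    rw [padicNorm.mul, padicNorm_neg_one_pow, one_mul]
    exact cQ_odd_norm j (fun i h1 h2 => hfac i h1 (h2.trans hj))
  rw [sQ, h0, h1]
  rw [padicNorm_sum_dominant (f := fun j => (-1 : ℚ) ^ (k - j) * cQ (2 * j + 1) y) ?_]
  · exact hterm k le_rfl
  · intro j hj
    rw [hterm j hj.le, hterm k le_rfl]
    calc padicNorm p (1 / ((2*j+1).factorial : ℚ)) * padicNorm p y * M ^ j
        ≤ padicNorm p (1 / ((2*k+1).factorial : ℚ)) * padicNorm p y * M ^ j := by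
          apply mul_le_mul_of_nonneg_right _ (by positivity)
          exact mul_le_mul_of_nonneg_right (inv_fact_mono (by omega)) (padicNorm.nonneg _)
      _ < padicNorm p (1 / ((2*k+1).factorial : ℚ)) * padicNorm p y * M ^ k :=
          (mul_lt_mul_iff_right₀ (mul_pos (inv_fact_pos _) hy)).mpr (pow_lt_pow_right₀ hM hj)

/-- If `|a| < |y|` then `|y² - a²| = |y|²`. -/
lemma factor_norm_y {y a : ℚ} (h : padicNorm p a < padicNorm p y) :
    padicNorm p (y ^ 2 - a ^ 2) = padicNorm p y ^ 2 := by
  have h2 : padicNorm p (-(a ^ 2)) < padicNorm p (y ^ 2) := by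
    rw [padicNorm.neg, padicNorm_pow, padicNorm_pow]
    exact pow_lt_pow_left₀ h (padicNorm.nonneg a) two_ne_zero
  rw [sub_eq_add_neg, padicNorm_add_left h2, padicNorm_pow]

/-- If `|y| < |a|` then `|y² - a²| = |a|²`. -/
lemma factor_norm_a {y a : ℚ} (h : padicNorm p y < padicNorm p a) :
    padicNorm p (y ^ 2 - a ^ 2) = padicNorm p a ^ 2 := by
  have h2 : padicNorm p (y ^ 2) < padicNorm p (-(a ^ 2)) := by
    rw [padicNorm.neg, padicNorm_pow, padicNorm_pow]
    exact pow_lt_pow_left₀ h (padicNorm.nonneg y) two_ne_zero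
  rw [show y ^ 2 - a ^ 2 = -(a ^ 2) + y ^ 2 from by ring, padicNorm_add_left h2,
    padicNorm.neg, padicNorm_pow]

end Aux

lemma unit_sub_odd {a : ℚ} (ha : padicNorm 2 a = 1) {n : ℕ} (hn : n % 2 = 1) :
    padicNorm 2 (a - (n : ℚ)) ≤ 1 / 2 := by
  haveI : Fact (Nat.Prime 2) := ⟨Nat.prime_two⟩
  have ha0 : a ≠ 0 := by rintro rfl; simp [padicNorm.zero] at ha
  have hden0 : (a.den : ℚ) ≠ 0 := Nat.cast_ne_zero.mpr a.den_nz
  have hrepr : a = (a.num : ℚ) / (a.den : ℚ) := (Rat.num_div_den a).symm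
  have hnd : padicNorm 2 (a.num : ℚ) = padicNorm 2 (a.den : ℚ) := by
    have := ha
    rw [hrepr, padicNorm.div] at this
    rwa [div_eq_one_iff_eq (padicNorm.nonzero hden0)] at this
  have hden_odd : ¬ (2 : ℕ) ∣ a.den := by
    intro h2
    have h1 : padicNorm 2 ((a.den : ℕ) : ℚ) < 1 := (padicNorm.nat_lt_one_iff _).mpr h2
    have h3 : (2:ℤ) ∣ a.num := by
      have : padicNorm 2 ((a.num : ℤ) : ℚ) < 1 := by rw [hnd]; exact_mod_cast h1
      exact (padicNorm.int_lt_one_iff _).mp this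
    have : (2:ℕ) ∣ a.num.natAbs := Int.natAbs_dvd_natAbs.mpr (by exact_mod_cast h3)
    have hg := Nat.dvd_gcd this h2
    rw [Nat.Coprime.gcd_eq_one a.reduced] at hg
    norm_num at hg
  have hnum_odd : ¬ (2:ℤ) ∣ a.num := by
    intro h2
    have h1 : padicNorm 2 ((a.num : ℤ) : ℚ) < 1 := (padicNorm.int_lt_one_iff _).mpr h2
    rw [hnd] at h1
    have := (padicNorm.nat_lt_one_iff (p := 2) a.den).mp (by exact_mod_cast h1)
    exact hden_odd this
  set m : ℤ := a.num - (n : ℤ) * (a.den : ℤ) with hm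
  have hmeven : (2:ℤ) ∣ m := by
    have h1 : Odd a.num := Int.odd_iff.mpr (by omega)
    have h2 : Odd ((n:ℤ) * (a.den:ℤ)) := by
      refine Odd.mul (Int.odd_iff.mpr (by omega)) (Int.odd_iff.mpr ?_)
      have : a.den % 2 = 1 := by omega
      omega
    exact (Odd.sub_odd h1 h2).two_dvd
  have key : a * (a.den : ℚ) = (a.num : ℚ) := Rat.mul_den_eq_num a
  have hrepr2 : a - (n : ℚ) = (m : ℚ) / (a.den : ℚ) := by
    rw [eq_div_iff hden0, hm]; push_cast; rw [sub_mul, key]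
  have hmnorm : padicNorm 2 ((m : ℤ) : ℚ) ≤ (2 : ℚ) ^ (-(1:ℕ) : ℤ) := by
    refine (padicNorm.dvd_iff_norm_le (p := 2) (n := 1) (z := m)).mp ?_
    simpa using hmeven
  have hdnorm : padicNorm 2 ((a.den : ℕ) : ℚ) = 1 :=
    (padicNorm.nat_eq_one_iff _).mpr hden_odd
  rw [hrepr2, padicNorm.div, hdnorm, div_one]
  calc padicNorm 2 ((m:ℤ):ℚ) ≤ (2:ℚ) ^ (-(1:ℕ) : ℤ) := hmnorm
    _ = 1 / 2 := by norm_num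

/-- For `d ≥ 2`, a prime `p` and `x ∈ ℚ` with `|x|_p > 1`, one has `|r_d(x)|_p > |x|_p`. -/
theorem rd_padic_escape (d : ℕ) (hd : 2 ≤ d) (p : ℕ) (hp : p.Prime) (x : ℚ)
    (hx : 1 < padicNorm p x) : padicNorm p x < padicNorm p (rQ d x) := by
  haveI : Fact p.Prime := ⟨hp⟩
  have hx0 : x ≠ 0 := by rintro rfl; rw [padicNorm.zero] at hx; linarith
  rcases Nat.even_or_odd d with he | ho
  · -- d even, d = 2k, k ≥ 1
    obtain ⟨k, hk⟩ := he
    have hk2 : d = 2 * k := by omega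
    subst hk2
    have hk1 : 1 ≤ k := by omega
    rw [rQ, if_pos (show (2 * k) % 2 = 0 from by omega)]
    set y : ℚ := x - 3 - (((2 * k : ℕ) : ℚ) + 1) / 2 with hydef
    obtain ⟨M, hM, hNMk, hfac⟩ :
        ∃ M : ℚ, 1 < M ∧ padicNorm p x < M ^ k ∧
          ∀ i : ℕ, 1 ≤ i → i ≤ k →
            padicNorm p (y ^ 2 - ((2 * (i : ℚ) - 1) / 2) ^ 2) = M := by
      by_cases hp2 : p = 2
      · subst hp2
        have h2val : padicNorm 2 (2 : ℚ) = 1 / 2 := by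
          simpa using padicNorm.padicNorm_p_of_prime (p := 2)
        have hai : ∀ i : ℕ, 1 ≤ i → padicNorm 2 ((2 * (i:ℚ) - 1) / 2) = 2 := by
          intro i hi
          have hcast : (2 * (i:ℚ) - 1) = ((2 * i - 1 : ℕ) : ℚ) := by
            push_cast [Nat.cast_sub (by omega : 1 ≤ 2 * i)]; ring
          rw [padicNorm.div, h2val, hcast,
            (padicNorm.nat_eq_one_iff _).mpr (show ¬ 2 ∣ (2 * i - 1) from by omega)]
          norm_num
        by_cases h4 : padicNorm 2 x < 4
        · -- |x| = 2 exactly; y is 2-integral, factors have norm 4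
          have hN2 : padicNorm 2 x = 2 := by
            have hz := padicNorm.eq_zpow_of_nonzero (p := 2) hx0
            set w : ℤ := -padicValRat 2 x with hw
            rw [hz] at hx h4 ⊢
            have hb : ((2:ℕ):ℚ) = (2:ℚ) := by norm_num
            rw [hb] at hx h4 ⊢
            have h1 : (0:ℤ) < w := by
              have : (2:ℚ) ^ (0:ℤ) < 2 ^ w := by simpa using hx
              exact (zpow_lt_zpow_iff_right₀ one_lt_two).mp this
            have h2 : w < 2 := by
              have : (2:ℚ) ^ w < 2 ^ (2:ℤ) := by norm_num; exact h4
              exact (zpow_lt_zpow_iff_right₀ one_lt_two).mp this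
            have : w = 1 := by omega
            rw [this]; norm_num
          have h2x : padicNorm 2 (2 * x) = 1 := by
            rw [padicNorm.mul, h2val, hN2]; norm_num
          have husub : padicNorm 2 (2 * x - ((2 * k + 7 : ℕ) : ℚ)) ≤ 1 / 2 :=
            unit_sub_odd h2x (by omega)
          have hyrepr : y = (2 * x - ((2 * k + 7 : ℕ) : ℚ)) / 2 := by
            rw [hydef]; push_cast; ring
          have hy1 : padicNorm 2 y ≤ 1 := by
            rw [hyrepr, padicNorm.div, h2val]
            rw [div_le_one (by norm_num)]
            linarith
          refine ⟨4, by norm_num, ?_, ?_⟩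
          · rw [hN2]
            calc (2:ℚ) < 4 := by norm_num
              _ ≤ 4 ^ k := le_self_pow₀ (by norm_num) (by omega)
          · intro i h1i hik
            have hya : padicNorm 2 y < padicNorm 2 ((2 * (i:ℚ) - 1) / 2) := by
              rw [hai i h1i]; linarith
            rw [factor_norm_a hya, hai i h1i]; norm_num
        · -- |x| ≥ 4
          push_neg at h4
          have h37 : padicNorm 2 (((2 * k + 7 : ℕ) : ℚ) / 2) ≤ 2 := by
            rw [padicNorm.div, h2val]
            have : padicNorm 2 ((2 * k + 7 : ℕ) : ℚ) ≤ 1 := padicNorm.of_nat _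
            rw [div_le_iff₀ (by norm_num)]
            linarith
          have hy_eq : y = x + -(((2 * k + 7 : ℕ) : ℚ) / 2) := by
            rw [hydef]; push_cast; ring
          have hyn : padicNorm 2 y = padicNorm 2 x := by
            rw [hy_eq]
            apply padicNorm_add_left
            rw [padicNorm.neg]
            linarith
          refine ⟨padicNorm 2 x ^ 2, by nlinarith, ?_, ?_⟩
          · calc padicNorm 2 x < padicNorm 2 x ^ 2 := by nlinarith
              _ ≤ (padicNorm 2 x ^ 2) ^ k := le_self_pow₀ (by nlinarith) (by omega)
          · intro i h1i hik
            have hai2 : padicNorm 2 ((2 * (i:ℚ) - 1) / 2) < padicNorm 2 y := by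
              rw [hai i h1i, hyn]; linarith
            rw [factor_norm_y hai2, hyn]
      · -- p odd
        have h2val : padicNorm p (2 : ℚ) = 1 := by
          have : ¬ p ∣ 2 := by
            intro h
            exact hp2 ((Nat.prime_dvd_prime_iff_eq hp Nat.prime_two).mp h)
          exact_mod_cast (padicNorm.nat_eq_one_iff (p := p) 2).mpr this
        have h37 : padicNorm p (((2 * k + 7 : ℕ) : ℚ) / 2) ≤ 1 := by
          rw [padicNorm.div, h2val, div_one]
          exact padicNorm.of_nat _
        have hy_eq : y = x + -(((2 * k + 7 : ℕ) : ℚ) / 2) := by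
          rw [hydef]; push_cast; ring
        have hyn : padicNorm p y = padicNorm p x := by
          rw [hy_eq]
          apply padicNorm_add_left
          rw [padicNorm.neg]
          linarith
        have hai : ∀ i : ℕ, 1 ≤ i → padicNorm p ((2 * (i:ℚ) - 1) / 2) ≤ 1 := by
          intro i hi
          have hcast : (2 * (i:ℚ) - 1) = ((2 * i - 1 : ℕ) : ℚ) := by
            push_cast [Nat.cast_sub (by omega : 1 ≤ 2 * i)]; ring
          rw [padicNorm.div, h2val, div_one, hcast]
          exact padicNorm.of_nat _
        refine ⟨padicNorm p x ^ 2, by nlinarith, ?_, ?_⟩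
        · calc padicNorm p x < padicNorm p x ^ 2 := by nlinarith
            _ ≤ (padicNorm p x ^ 2) ^ k := le_self_pow₀ (by nlinarith) (by omega)
        · intro i h1i hik
          have hai2 : padicNorm p ((2 * (i:ℚ) - 1) / 2) < padicNorm p y := by
            rw [hyn]; exact lt_of_le_of_lt (hai i h1i) hx
          rw [factor_norm_y hai2, hyn]
    -- common ending for even case
    have hS := sQ_even_norm (p := p) k hM hfac
    have hSge : M ^ k ≤ padicNorm p (sQ (2 * k) y) := by
      rw [hS]
      exact le_mul_of_one_le_left (by positivity) (one_le_inv_fact _)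
    have hMk : 1 < M ^ k := one_lt_pow₀ hM (by omega)
    have h2S : padicNorm p (2 : ℚ) < padicNorm p (sQ (2 * k) y) := by
      have h2le : padicNorm p (2 : ℚ) ≤ 1 := by exact_mod_cast padicNorm.of_nat (p := p) 2
      linarith
    calc padicNorm p x < M ^ k := hNMk
      _ ≤ padicNorm p (sQ (2 * k) y) := hSge
      _ = padicNorm p (sQ (2 * k) y + 2) := (padicNorm_add_left h2S).symm
  · -- d odd, d = 2k+1, k ≥ 1
    obtain ⟨k, hk⟩ := ho
    subst hk
    have hk1 : 1 ≤ k := by omega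
    rw [rQ, if_neg (show ¬ (2 * k + 1) % 2 = 0 from by omega)]
    set y : ℚ := x - 3 - (((2 * k + 1 : ℕ) : ℚ) + 1) / 2 with hydef
    have hy_eq : y = x + -(((k + 4 : ℕ) : ℚ)) := by
      rw [hydef]; push_cast; ring
    have hyn : padicNorm p y = padicNorm p x := by
      rw [hy_eq]
      apply padicNorm_add_left
      rw [padicNorm.neg]
      exact lt_of_le_of_lt (padicNorm.of_nat _) hx
    have hy0 : 0 < padicNorm p y := by rw [hyn]; linarith
    have hM : 1 < padicNorm p x ^ 2 := by nlinarith
    have hfac : ∀ i : ℕ, 1 ≤ i → i ≤ k →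
        padicNorm p (y ^ 2 - (i:ℚ) ^ 2) = padicNorm p x ^ 2 := by
      intro i h1i hik
      have hia : padicNorm p ((i : ℚ)) < padicNorm p y := by
        rw [hyn]; exact lt_of_le_of_lt (padicNorm.of_nat i) hx
      rw [factor_norm_y hia, hyn]
    have hS := sQ_odd_norm (p := p) k hM hy0 hfac
    have hSgt : padicNorm p x < padicNorm p (sQ (2 * k + 1) y) := by
      rw [hS, hyn]
      have hA := one_le_inv_fact (p := p) (2 * k + 1)
      have hMk : 1 < (padicNorm p x ^ 2) ^ k := one_lt_pow₀ hM (by omega)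
      have hN0 : 0 < padicNorm p x := by linarith
      have step1 : padicNorm p x < padicNorm p x * (padicNorm p x ^ 2) ^ k :=
        lt_mul_of_one_lt_right hN0 hMk
      have step2 : padicNorm p x * (padicNorm p x ^ 2) ^ k ≤
          padicNorm p (1 / ((2 * k + 1).factorial : ℚ)) * padicNorm p x
            * (padicNorm p x ^ 2) ^ k :=
        mul_le_mul_of_nonneg_right (le_mul_of_one_le_left hN0.le hA) (by positivity)
      linarith
    have hB : padicNorm p (-x + (((2 * k + 1 : ℕ) : ℚ) + 6)) = padicNorm p x := by
      have hc : ((2 * k + 1 : ℕ) : ℚ) + 6 = ((2 * k + 7 : ℕ) : ℚ) := by push_cast; ring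
      rw [hc]
      rw [show padicNorm p x = padicNorm p (-x) from (padicNorm.neg x).symm]
      apply padicNorm_add_left
      rw [padicNorm.neg]
      exact lt_of_le_of_lt (padicNorm.of_nat _) hx
    have hexpr : sQ (2 * k + 1) y - x + ((2 * k + 1 : ℕ) : ℚ) + 6
        = sQ (2 * k + 1) y + (-x + (((2 * k + 1 : ℕ) : ℚ) + 6)) := by ring
    rw [hexpr, padicNorm_add_left (by rw [hB]; exact hSgt)]
    exact hSgt
end
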